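/- arXiv:2311.08003 — 2 statements merged into one kernel-verified Lean document; each statement's English description precedes it below -/
import Mathlib

section
/- Let (Q,R) be a gentle presentation and let u be an element of Γ_1∥B. If u is a cocycle of the complex k(Γ∥B) and not a coboundary, then one of the following holds: (i) the characteristic of k is 2 and there is a loop b with b² ∈ R such that u = (b,s(b)); (ii) there is a Γ-maximal arrow c and a path α ∈ B neither beginning nor ending with c such that u = (c,α); (iii) there is a cocomplete cycle δ starting with an arrow c such that u = (c,cδ); (iv) there is an arrow c with u = (c,c). Conversely, if u satisfies one of these four conditions then u is a cocycle. -/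
/-!
Common framework: quivers, paths (as a start vertex together with a list of
composable arrows, listed in order of traversal, so that the paper's path
`c_m ⋯ c_1` corresponds to the list `[c_1, …, c_m]`), gentle and quadratic
monomial presentations, the cochain complex `k(Γ ∥ B)` and the chain complex
`k(B ⊙ Γ)` of the paper.
-/

namespace GentleTT

structure Quiv where
  V : Type
  A : Type
  [fintV : Fintype V]
  [fintA : Fintype A]
  [decV : DecidableEq V]
  [decA : DecidableEq A]
  src : A → V
  tgt : A → V

attribute [instance] Quiv.fintV Quiv.fintA Quiv.decV Quiv.decA

/-- A "path datum": a start vertex together with the list of arrows traversed. -/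
abbrev PathDat (Q : Quiv) := Q.V × List Q.A

def psrc (Q : Quiv) (p : PathDat Q) : Q.V := p.1

def ptgt (Q : Quiv) (p : PathDat Q) : Q.V := p.2.getLast?.elim p.1 Q.tgt

def plen (Q : Quiv) (p : PathDat Q) : ℕ := p.2.length

/-- `p` is a genuine path: consecutive arrows compose, and the recorded start
vertex is the source of the first arrow (if any). -/
def Ok (Q : Quiv) (p : PathDat Q) : Prop :=
  p.2.Chain' (fun a b => Q.tgt a = Q.src b) ∧ ∀ a ∈ p.2.head?, Q.src a = p.1

/-- `p` is a path none of whose length-2 subpaths lies in `R`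
(an element of the basis `B` of `kQ/⟨R⟩`). -/
def InB (Q : Quiv) (R : Set (Q.A × Q.A)) (p : PathDat Q) : Prop :=
  Ok Q p ∧ p.2.Chain' (fun a b => (a, b) ∉ R)

/-- `p` is a path all of whose length-2 subpaths lie in `R` (an element of `Γ`). -/
def InG (Q : Quiv) (R : Set (Q.A × Q.A)) (p : PathDat Q) : Prop :=
  Ok Q p ∧ p.2.Chain' (fun a b => (a, b) ∈ R)

/-- Parallel paths: same source and same target. -/
def Par (Q : Quiv) (p q : PathDat Q) : Prop :=
  psrc Q p = psrc Q q ∧ ptgt Q p = ptgt Q q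

/-- Antiparallel paths: `s(p) = t(q)` and `t(p) = s(q)`. -/
def AntiPar (Q : Quiv) (p q : PathDat Q) : Prop :=
  psrc Q p = ptgt Q q ∧ ptgt Q p = psrc Q q

/-- A cycle: a path of positive length whose source equals its target. -/
def IsCycle (Q : Quiv) (p : PathDat Q) : Prop :=
  Ok Q p ∧ p.2 ≠ [] ∧ psrc Q p = ptgt Q p

/-- Rotation of a cycle: the paper's `rot (c_m ⋯ c_1) = c_{m-1} ⋯ c_1 c_m`
(the last arrow traversed becomes the first one traversed). -/
def rotP (Q : Quiv) (p : PathDat Q) : PathDat Q :=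
  match p.2.getLast? with
  | none => p
  | some a => (Q.src a, a :: p.2.dropLast)

/-- Iterated rotation `rot^i`. -/
def rotI (Q : Quiv) (i : ℕ) (p : PathDat Q) : PathDat Q := (rotP Q)^[i] p

def powL {α : Type} (l : List α) : ℕ → List α
  | 0 => []
  | n + 1 => l ++ powL l n

/-- The `n`-th power `p^n` of a (cyclic) path. -/
def powP (Q : Quiv) (p : PathDat Q) (n : ℕ) : PathDat Q := (p.1, powL p.2 n)

/-- A primitive cycle: a cycle that is not a proper power of another cycle. -/
def IsPrimitive (Q : Quiv) (p : PathDat Q) : Prop :=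
  IsCycle Q p ∧ ∀ (q : PathDat Q) (n : ℕ), IsCycle Q q → 2 ≤ n → p ≠ powP Q q n

/-- The period of a cycle: the least `i ≥ 1` with `rot^i p = p`. -/
noncomputable def periodP (Q : Quiv) (p : PathDat Q) : ℕ :=
  sInf {i : ℕ | 1 ≤ i ∧ rotI Q i p = p}

/-- Two cycles are conjugate (belong to the same circuit) if one is obtained
from the other by iterated rotation. -/
def RotEquiv (Q : Quiv) (p q : PathDat Q) : Prop := ∃ i : ℕ, rotI Q i p = q

/-- A cocomplete cycle: `p² ∈ B`. -/
def Cocomplete (Q : Quiv) (R : Set (Q.A × Q.A)) (p : PathDat Q) : Prop :=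
  IsCycle Q p ∧ InB Q R (powP Q p 2)

/-- A complete cycle: `p² ∈ Γ`. -/
def Complete (Q : Quiv) (R : Set (Q.A × Q.A)) (p : PathDat Q) : Prop :=
  IsCycle Q p ∧ InG Q R (powP Q p 2)

/-- `B`-maximal path: in `B` and not a proper subpath of another element of `B`. -/
def BMax (Q : Quiv) (R : Set (Q.A × Q.A)) (p : PathDat Q) : Prop :=
  InB Q R p ∧ ∀ q : PathDat Q, InB Q R q → p.2 <:+: q.2 → p.2 = q.2

/-- `Γ`-maximal path: in `Γ` and not a proper subpath of another element of `Γ`. -/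
def GMax (Q : Quiv) (R : Set (Q.A × Q.A)) (p : PathDat Q) : Prop :=
  InG Q R p ∧ ∀ q : PathDat Q, InG Q R q → p.2 <:+: q.2 → p.2 = q.2

def Adj (Q : Quiv) (v w : Q.V) : Prop :=
  ∃ a : Q.A, (Q.src a = v ∧ Q.tgt a = w) ∨ (Q.src a = w ∧ Q.tgt a = v)

/-- Connectedness of the underlying graph of the quiver. -/
def Connected (Q : Quiv) : Prop := ∀ v w : Q.V, Relation.ReflTransGen (Adj Q) v w

/-- A quadratic monomial presentation: the relations are paths of length 2. -/
def IsQuadMon (Q : Quiv) (R : Set (Q.A × Q.A)) : Prop :=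
  ∀ r ∈ R, Q.tgt r.1 = Q.src r.2

/-- A gentle presentation. -/
structure IsGentle (Q : Quiv) (R : Set (Q.A × Q.A)) : Prop where
  nonempty : Nonempty Q.V
  connected : Connected Q
  relComposable : ∀ r ∈ R, Q.tgt r.1 = Q.src r.2
  srcLe : ∀ v : Q.V, {a : Q.A | Q.src a = v}.ncard ≤ 2
  tgtLe : ∀ v : Q.V, {a : Q.A | Q.tgt a = v}.ncard ≤ 2
  uniqNotRelAfter : ∀ a : Q.A, {b : Q.A | Q.tgt a = Q.src b ∧ (a, b) ∉ R}.Subsingleton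
  uniqNotRelBefore : ∀ a : Q.A, {c : Q.A | Q.tgt c = Q.src a ∧ (c, a) ∉ R}.Subsingleton
  uniqRelAfter : ∀ a : Q.A, {b : Q.A | Q.tgt a = Q.src b ∧ (a, b) ∈ R}.Subsingleton
  uniqRelBefore : ∀ a : Q.A, {c : Q.A | Q.tgt c = Q.src a ∧ (c, a) ∈ R}.Subsingleton

/-- A spanning tree of the (finite, connected) quiver `Q`: a set of arrows
which connects all vertices and has exactly `|Q₀| - 1` elements. -/
def IsSpanningTree (Q : Quiv) (T : Set Q.A) : Prop :=
  (∀ v w : Q.V, Relation.ReflTransGen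
      (fun x y => ∃ a ∈ T, (Q.src a = x ∧ Q.tgt a = y) ∨ (Q.src a = y ∧ Q.tgt a = x)) v w) ∧
  T.ncard + 1 = Fintype.card Q.V

/-- A set of representatives, one for each rotation class of cycles
satisfying `Pred`. -/
def IsRepSet (Q : Quiv) (P : Set (PathDat Q)) (Pred : PathDat Q → Prop) : Prop :=
  (∀ p ∈ P, Pred p) ∧ ∀ q : PathDat Q, Pred q → ∃! p, p ∈ P ∧ RotEquiv Q q p

/-- `S` is a valid choice of the paper's set `Crep` for the predicate `Pred`
(e.g. cocompleteness, or completeness): it consists of all positive powers of a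
chosen set of representatives of the rotation classes of primitive cycles
satisfying `Pred`. -/
def IsCrep (Q : Quiv) (S : Set (PathDat Q)) (Pred : PathDat Q → Prop) : Prop :=
  ∃ P : Set (PathDat Q),
    IsRepSet Q P (fun p => IsPrimitive Q p ∧ Pred p) ∧
    S = {x | ∃ p ∈ P, ∃ n : ℕ, 1 ≤ n ∧ x = powP Q p n}

/-! ### The cochain complex `k(Γ ∥ B)` -/

/-- Membership in the degree-`m` basis `Γ_m ∥ B` of the cochain complex. -/
def GBmem (Q : Quiv) (R : Set (Q.A × Q.A)) (m : ℕ) (x : PathDat Q × PathDat Q) : Prop :=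
  InG Q R x.1 ∧ plen Q x.1 = m ∧ InB Q R x.2 ∧ Par Q x.1 x.2

abbrev GB (Q : Quiv) (R : Set (Q.A × Q.A)) (m : ℕ) :=
  {x : PathDat Q × PathDat Q // GBmem Q R m x}

/-- The degree-`m` component of the cochain complex `k(Γ ∥ B)`. -/
abbrev Coch (k : Type) [Field k] (Q : Quiv) (R : Set (Q.A × Q.A)) (m : ℕ) :=
  GB Q R m →₀ k

/-- The basis vector of `k(Γ_m ∥ B)` attached to a raw pair of path data
(and `0` if the pair is not in `Γ_m ∥ B`). -/
noncomputable def bv (k : Type) [Field k] (Q : Quiv) (R : Set (Q.A × Q.A)) (m : ℕ)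
    (x : PathDat Q × PathDat Q) : Coch k Q R m := by
  classical
  exact if h : GBmem Q R m x then Finsupp.single (⟨x, h⟩ : GB Q R m) (1 : k) else 0

/-- Extension on the left (in the paper's notation): `p ↦ b p`. -/
def extL (Q : Quiv) (b : Q.A) (p : PathDat Q) : PathDat Q := (p.1, p.2 ++ [b])

/-- Extension on the right (in the paper's notation): `p ↦ p a`. -/
def extR (Q : Quiv) (a : Q.A) (p : PathDat Q) : PathDat Q := (Q.src a, a :: p.2)

/-- The differential on a basis element:
`d^m (γ, α) = Σ_b (bγ, bα) - (-1)^m Σ_a (γa, αa)`. -/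
noncomputable def dB (k : Type) [Field k] (Q : Quiv) (R : Set (Q.A × Q.A)) (m : ℕ)
    (x : GB Q R m) : Coch k Q R (m + 1) := by
  classical
  exact
    (∑ b : Q.A,
      if h : GBmem Q R (m + 1) (extL Q b x.val.1, extL Q b x.val.2) then
        Finsupp.single (⟨_, h⟩ : GB Q R (m + 1)) (1 : k) else 0)
    - ((-1 : k) ^ m) •
      (∑ a : Q.A,
        if h : Q.tgt a = psrc Q x.val.1 ∧
            GBmem Q R (m + 1) (extR Q a x.val.1, extR Q a x.val.2) then
          Finsupp.single (⟨_, h.2⟩ : GB Q R (m + 1)) (1 : k) else 0)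

/-- The differential `d^m : k(Γ_m ∥ B) → k(Γ_{m+1} ∥ B)`. -/
noncomputable def dLin (k : Type) [Field k] (Q : Quiv) (R : Set (Q.A × Q.A)) (m : ℕ) :
    Coch k Q R m →ₗ[k] Coch k Q R (m + 1) :=
  Finsupp.linearCombination k (dB k Q R m)

/-- The element `𝟙 = Σ_{i ∈ Q₀} (e_i, e_i)` (placed in degree `m`; it is the
intended element when `m = 0`). -/
noncomputable def oneD (k : Type) [Field k] (Q : Quiv) (R : Set (Q.A × Q.A)) (m : ℕ) :
    Coch k Q R m :=
  ∑ i : Q.V, bv k Q R m ((i, []), (i, []))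

/-- `⟨α⟩ = Σ_{i=0}^{r-1} (s(rot^i α), rot^i α)`, `r` the period of `α`. -/
noncomputable def cycB (k : Type) [Field k] (Q : Quiv) (R : Set (Q.A × Q.A)) (m : ℕ)
    (α : PathDat Q) : Coch k Q R m :=
  ∑ i ∈ Finset.range (periodP Q α),
    bv k Q R m ((psrc Q (rotI Q i α), []), rotI Q i α)

/-- `⟨C⟩ = Σ_{i=0}^{r-1} (-1)^{i m} (rot^i C, s(rot^i C))`, `r` the period of `C`. -/
noncomputable def cycG (k : Type) [Field k] (Q : Quiv) (R : Set (Q.A × Q.A)) (m : ℕ)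
    (C : PathDat Q) : Coch k Q R m :=
  ∑ i ∈ Finset.range (periodP Q C),
    ((-1 : k) ^ (i * m)) • bv k Q R m (rotI Q i C, (psrc Q (rotI Q i C), []))

/-- The coboundary subspace in degree `m` (zero in degree `0`). -/
noncomputable def cobSp (k : Type) [Field k] (Q : Quiv) (R : Set (Q.A × Q.A)) :
    (m : ℕ) → Submodule k (Coch k Q R m)
  | 0 => ⊥
  | m + 1 => LinearMap.range (dLin k Q R m)

/-- The cocycle subspace in degree `m`. -/
noncomputable def cocSp (k : Type) [Field k] (Q : Quiv) (R : Set (Q.A × Q.A)) (m : ℕ) :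
    Submodule k (Coch k Q R m) :=
  LinearMap.ker (dLin k Q R m)

/-- The degree-`m` cohomology `HH^m` of the complex `k(Γ ∥ B)` vanishes:
every cocycle is a coboundary. -/
def CohomIsZero (k : Type) [Field k] (Q : Quiv) (R : Set (Q.A × Q.A)) (m : ℕ) : Prop :=
  cocSp k Q R m ≤ cobSp k Q R m

/-- The degree-`m` cohomology `HH^m` of the complex `k(Γ ∥ B)` is
finite-dimensional: there is a finite set of cocycles whose classes span it. -/
def CohomFinDim (k : Type) [Field k] (Q : Quiv) (R : Set (Q.A × Q.A)) (m : ℕ) : Prop :=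
  ∃ G : Finset (Coch k Q R m), ↑G ⊆ (cocSp k Q R m : Set (Coch k Q R m)) ∧
    cocSp k Q R m ≤ cobSp k Q R m ⊔ Submodule.span k ↑G

/-- The degree-`m` cohomology `HH^m` of the complex `k(Γ ∥ B)` has dimension at
most `n`: there are `n` cocycles whose classes span it. -/
def CohomDimLe (k : Type) [Field k] (Q : Quiv) (R : Set (Q.A × Q.A)) (m n : ℕ) : Prop :=
  ∃ G : Finset (Coch k Q R m), G.card ≤ n ∧
    ↑G ⊆ (cocSp k Q R m : Set (Coch k Q R m)) ∧
    cocSp k Q R m ≤ cobSp k Q R m ⊔ Submodule.span k ↑G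

/-- `Gen` is a basis of the kernel of `d⁰`, i.e. it freely generates `HH⁰`. -/
def FreelyGeneratesKer0 (k : Type) [Field k] (Q : Quiv) (R : Set (Q.A × Q.A))
    (Gen : Set (Coch k Q R 0)) : Prop :=
  (∀ x ∈ Gen, dLin k Q R 0 x = 0) ∧
  (∀ z : Coch k Q R 0, dLin k Q R 0 z = 0 → z ∈ Submodule.span k Gen) ∧
  LinearIndependent k (fun x : Gen => (x : Coch k Q R 0))

/-- The cohomology classes of the elements of `Gen` freely generate the
degree-`(m+1)` cohomology of `k(Γ ∥ B)`: all elements of `Gen` are cocycles,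
every cocycle is congruent to an element of their span modulo coboundaries, no
nonzero element of their span is a coboundary, and `Gen` is linearly
independent. -/
def FreelyGeneratesCohom (k : Type) [Field k] (Q : Quiv) (R : Set (Q.A × Q.A)) (m : ℕ)
    (Gen : Set (Coch k Q R (m + 1))) : Prop :=
  (∀ x ∈ Gen, dLin k Q R (m + 1) x = 0) ∧
  (∀ z : Coch k Q R (m + 1), dLin k Q R (m + 1) z = 0 →
      ∃ y : Coch k Q R m, z - dLin k Q R m y ∈ Submodule.span k Gen) ∧
  (∀ x ∈ Submodule.span k Gen, x ∈ LinearMap.range (dLin k Q R m) → x = 0) ∧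
  LinearIndependent k (fun x : Gen => (x : Coch k Q R (m + 1)))

/-! ### The chain complex `k(B ⊙ Γ)` -/

/-- Membership in the degree-`m` basis `B ⊙ Γ_m` of the chain complex. -/
def BGmem (Q : Quiv) (R : Set (Q.A × Q.A)) (m : ℕ) (x : PathDat Q × PathDat Q) : Prop :=
  InB Q R x.1 ∧ InG Q R x.2 ∧ plen Q x.2 = m ∧ AntiPar Q x.1 x.2

abbrev BGt (Q : Quiv) (R : Set (Q.A × Q.A)) (m : ℕ) :=
  {x : PathDat Q × PathDat Q // BGmem Q R m x}

/-- The degree-`m` component of the chain complex `k(B ⊙ Γ)`. -/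
abbrev Chn (k : Type) [Field k] (Q : Quiv) (R : Set (Q.A × Q.A)) (m : ℕ) :=
  BGt Q R m →₀ k

/-- The basis vector of `k(B ⊙ Γ_m)` attached to a raw pair of path data
(and `0` if the pair is not in `B ⊙ Γ_m`). -/
noncomputable def bw (k : Type) [Field k] (Q : Quiv) (R : Set (Q.A × Q.A)) (m : ℕ)
    (x : PathDat Q × PathDat Q) : Chn k Q R m := by
  classical
  exact if h : BGmem Q R m x then Finsupp.single (⟨x, h⟩ : BGt Q R m) (1 : k) else 0

/-- `l1(p)`: the last arrow of `p` (as a path of length one). -/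
def l1P (Q : Quiv) (p : PathDat Q) : PathDat Q :=
  match p.2.getLast? with
  | none => p
  | some a => (Q.src a, [a])

/-- `l2(p)`: `p` with its last arrow removed. -/
def l2P (Q : Quiv) (p : PathDat Q) : PathDat Q := (p.1, p.2.dropLast)

/-- `r1(p)`: `p` with its first arrow removed. -/
def r1P (Q : Quiv) (p : PathDat Q) : PathDat Q :=
  match p.2 with
  | [] => p
  | a :: l => (Q.tgt a, l)

/-- `r2(p)`: the first arrow of `p` (as a path of length one). -/
def r2P (Q : Quiv) (p : PathDat Q) : PathDat Q :=
  match p.2 with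
  | [] => p
  | a :: _ => (Q.src a, [a])

/-- The raw first term `(α·l1(γ), l2(γ))` of the boundary of `(α, γ)`. -/
def d1raw (Q : Quiv) (x : PathDat Q × PathDat Q) : PathDat Q × PathDat Q :=
  match x.2.2.getLast? with
  | none => x
  | some a => ((Q.src a, a :: x.1.2), (x.2.1, x.2.2.dropLast))

/-- The raw second term `(r2(γ)·α, r1(γ))` of the boundary of `(α, γ)`. -/
def d2raw (Q : Quiv) (x : PathDat Q × PathDat Q) : PathDat Q × PathDat Q :=
  match x.2.2 with
  | [] => x
  | c :: l => ((x.1.1, x.1.2 ++ [c]), (Q.tgt c, l))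

/-- The boundary of a basis element:
`d_m (α, γ) = (α·l1(γ), l2(γ)) + (-1)^m (r2(γ)·α, r1(γ))` (in degree `m = m+1`),
where pairs whose first component is not in `B` are interpreted as `0`. -/
noncomputable def bdB (k : Type) [Field k] (Q : Quiv) (R : Set (Q.A × Q.A)) (m : ℕ)
    (x : BGt Q R (m + 1)) : Chn k Q R m :=
  bw k Q R m (d1raw Q x.val) + ((-1 : k) ^ (m + 1)) • bw k Q R m (d2raw Q x.val)

/-- The boundary map `d_{m+1} : k(B ⊙ Γ_{m+1}) → k(B ⊙ Γ_m)`. -/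
noncomputable def bd (k : Type) [Field k] (Q : Quiv) (R : Set (Q.A × Q.A)) (m : ℕ) :
    Chn k Q R (m + 1) →ₗ[k] Chn k Q R m :=
  Finsupp.linearCombination k (bdB k Q R m)

/-- The subspace of cycles in degree `m` (everything in degree `0`). -/
noncomputable def ZSp (k : Type) [Field k] (Q : Quiv) (R : Set (Q.A × Q.A)) :
    (m : ℕ) → Submodule k (Chn k Q R m)
  | 0 => ⊤
  | m + 1 => LinearMap.ker (bd k Q R m)

/-- The subspace of boundaries in degree `m`. -/
noncomputable def BSp (k : Type) [Field k] (Q : Quiv) (R : Set (Q.A × Q.A)) (m : ℕ) :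
    Submodule k (Chn k Q R m) :=
  LinearMap.range (bd k Q R m)

/-- The degree-`m` homology `HH_m` of the complex `k(B ⊙ Γ)` vanishes:
every cycle is a boundary. -/
def HomIsZero (k : Type) [Field k] (Q : Quiv) (R : Set (Q.A × Q.A)) (m : ℕ) : Prop :=
  ZSp k Q R m ≤ BSp k Q R m

/-- The degree-`m` homology `HH_m` of the complex `k(B ⊙ Γ)` is
finite-dimensional: there is a finite set of cycles whose classes span it. -/
def HomFinDim (k : Type) [Field k] (Q : Quiv) (R : Set (Q.A × Q.A)) (m : ℕ) : Prop :=
  ∃ G : Finset (Chn k Q R m), ↑G ⊆ (ZSp k Q R m : Set (Chn k Q R m)) ∧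
    ZSp k Q R m ≤ BSp k Q R m ⊔ Submodule.span k ↑G

/-- The concatenation `α γ` of an antiparallel pair (a cycle, or a trivial path). -/
def concatP (Q : Quiv) (x : PathDat Q × PathDat Q) : PathDat Q := (x.2.1, x.2.2 ++ x.1.2)

/-- The degree-`m` component of the subcomplex `k(B ⊙ Γ)_C`, spanned by the
basis elements whose concatenation lies in the circuit (rotation class) of `c`. -/
noncomputable def Wsp (k : Type) [Field k] (Q : Quiv) (R : Set (Q.A × Q.A))
    (c : PathDat Q) (m : ℕ) : Submodule k (Chn k Q R m) :=
  Submodule.span k {z : Chn k Q R m |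
    ∃ x : BGt Q R m, RotEquiv Q (concatP Q x.val) c ∧ z = Finsupp.single x (1 : k)}

/-- The boundaries of the subcomplex `k(B ⊙ Γ)_C` in degree `m`. -/
noncomputable def WB (k : Type) [Field k] (Q : Quiv) (R : Set (Q.A × Q.A))
    (c : PathDat Q) (m : ℕ) : Submodule k (Chn k Q R m) :=
  Submodule.map (bd k Q R m) (Wsp k Q R c (m + 1))

/-- The cycles of the subcomplex `k(B ⊙ Γ)_C` in degree `m`. -/
noncomputable def WZ (k : Type) [Field k] (Q : Quiv) (R : Set (Q.A × Q.A))
    (c : PathDat Q) (m : ℕ) : Submodule k (Chn k Q R m) :=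
  ZSp k Q R m ⊓ Wsp k Q R c m

/-- The degree-`m` homology of `k(B ⊙ Γ)_C` is one-dimensional, spanned by the
homology class of `v`. -/
def SubHomSpannedBy (k : Type) [Field k] (Q : Quiv) (R : Set (Q.A × Q.A))
    (c : PathDat Q) (m : ℕ) (v : Chn k Q R m) : Prop :=
  v ∈ WZ k Q R c m ∧ v ∉ WB k Q R c m ∧
  ∀ z ∈ WZ k Q R c m, ∃ t : k, z - t • v ∈ WB k Q R c m

/-- `ĥ(c) = Σ_{i=0}^{r-1} (r1(rot^i c), r2(rot^i c))` (degree 1, for cocomplete cycles;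
placed in degree `m`). -/
noncomputable def hCycR (k : Type) [Field k] (Q : Quiv) (R : Set (Q.A × Q.A)) (m : ℕ)
    (c : PathDat Q) : Chn k Q R m :=
  ∑ i ∈ Finset.range (periodP Q c),
    bw k Q R m (r1P Q (rotI Q i c), r2P Q (rotI Q i c))

/-- `ĥ(c) = Σ_{i=0}^{r-1} (-1)^{(m+1) i} (s(rot^i c), rot^i c)` (degree `m`, for
complete cycles of length `m`). -/
noncomputable def hCycM (k : Type) [Field k] (Q : Quiv) (R : Set (Q.A × Q.A)) (m : ℕ)
    (c : PathDat Q) : Chn k Q R m :=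
  ∑ i ∈ Finset.range (periodP Q c),
    ((-1 : k) ^ ((m + 1) * i)) • bw k Q R m ((psrc Q (rotI Q i c), []), rotI Q i c)

/-- The homology classes of the elements of `Gen` freely generate the degree-`m`
homology of `k(B ⊙ Γ)`. -/
def FreelyGeneratesHom (k : Type) [Field k] (Q : Quiv) (R : Set (Q.A × Q.A)) (m : ℕ)
    (Gen : Set (Chn k Q R m)) : Prop :=
  (∀ x ∈ Gen, x ∈ ZSp k Q R m) ∧
  (∀ z ∈ ZSp k Q R m, ∃ y : Chn k Q R (m + 1), z - bd k Q R m y ∈ Submodule.span k Gen) ∧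
  (∀ x ∈ Submodule.span k Gen, x ∈ LinearMap.range (bd k Q R m) → x = 0) ∧
  LinearIndependent k (fun x : Gen => (x : Chn k Q R m))

/-- The four alternatives of Statement 3 for an element `u` of `Γ₁ ∥ B`. -/
def RankOneAlternatives (k : Type) [Field k] (Q : Quiv) (R : Set (Q.A × Q.A))
    (u : GB Q R 1) : Prop :=
  (ringChar k = 2 ∧ ∃ b : Q.A, Q.src b = Q.tgt b ∧ (b, b) ∈ R ∧
      u.val = ((Q.src b, [b]), (Q.src b, []))) ∨
  (∃ (c : Q.A) (α : PathDat Q), GMax Q R (Q.src c, [c]) ∧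
      α.2.head? ≠ some c ∧ α.2.getLast? ≠ some c ∧ u.val = ((Q.src c, [c]), α)) ∨
  (∃ (c : Q.A) (δ : PathDat Q), Cocomplete Q R δ ∧ δ.2.head? = some c ∧
      u.val = ((Q.src c, [c]), (δ.1, δ.2 ++ [c]))) ∨
  (∃ c : Q.A, u.val = ((Q.src c, [c]), (Q.src c, [c])))

/-!
Write `u = (c, α)`. The differential `d¹u` is the sum of those extensions `(bc, bα)` and
`(ca, αa)` of `u` that lie in `Γ₂ ∥ B`. A left and a right extension coincide only when `c` is a
loop with `c² ∈ R` and `α` is trivial, where the common term gets coefficient `2`; every other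
extension has coefficient `±1`. So, outside that characteristic-2 case, `u` is a cocycle exactly
when it has no extension at all. By gentleness this says: if some `cb` lies in `R` then `α` ends
with `c`, and if some `ac` lies in `R` then `α` starts with `c`. If `α` starts and ends with `c`
we are in case (iii) or (iv); if it does neither, `c` is `Γ`-maximal (case (ii)). If `α` ends
with `c` but does not start with it, then `u` is the coboundary of `(e, α')`, where `α'` is `α`
without its final `c`, and symmetrically in the mirror case.
-/

theorem _root_.List.isChain_append_singleton_iff {α : Type} {r : α → α → Prop} {l : List α}
    {b : α} : List.IsChain r (l ++ [b]) ↔ List.IsChain r l ∧ ∀ z ∈ l.getLast?, r z b := by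
  simp [List.isChain_append]

theorem _root_.List.getLast?_eq_of_cons_eq_append_singleton {α : Type} {a : α} {l : List α}
    (h : a :: l = l ++ [a]) (hl : l ≠ []) : l.getLast? = some a := by
  have := congrArg List.getLast? h
  rwa [List.getLast?_cons_of_ne_nil hl, List.getLast?_concat] at this

section Paths

variable {Q : Quiv} {R : Set (Q.A × Q.A)}

lemma ok_iff {p : PathDat Q} :
    Ok Q p ↔ p.2.IsChain (fun a b => Q.tgt a = Q.src b) ∧ ∀ a ∈ p.2.head?, Q.src a = p.1 :=
  Iff.rfl

lemma inB_iff {p : PathDat Q} : InB Q R p ↔ Ok Q p ∧ p.2.IsChain (fun a b => (a, b) ∉ R) :=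
  Iff.rfl

lemma inG_iff {p : PathDat Q} : InG Q R p ↔ Ok Q p ∧ p.2.IsChain (fun a b => (a, b) ∈ R) :=
  Iff.rfl

lemma ptgt_of_getLast? {p : PathDat Q} {z : Q.A} (h : p.2.getLast? = some z) :
    ptgt Q p = Q.tgt z := by
  simp [ptgt, h]

lemma ptgt_extL (b : Q.A) (p : PathDat Q) : ptgt Q (extL Q b p) = Q.tgt b := by
  simp [ptgt, extL]

lemma ptgt_extR {a : Q.A} {p : PathDat Q} (h : Q.tgt a = p.1) :
    ptgt Q (extR Q a p) = ptgt Q p := by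
  rcases p with ⟨v, _ | ⟨x, l⟩⟩
  · simp [ptgt, extR, h]
  · simp [ptgt, extR, List.getLast?_cons]

lemma ok_extL_iff {b : Q.A} {p : PathDat Q} :
    Ok Q (extL Q b p) ↔ Ok Q p ∧ ptgt Q p = Q.src b := by
  rcases p with ⟨v, _ | ⟨x, l⟩⟩
  · simp [ok_iff, extL, ptgt, eq_comm]
  · rw [ok_iff, ok_iff]
    dsimp only [extL]
    rw [List.isChain_append_singleton_iff]
    simp only [ptgt, List.getLast?_cons, List.cons_append, List.head?_cons, Option.mem_def,
      Option.some.injEq, forall_eq', Option.elim_some]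
    tauto

lemma ok_extR_iff {a : Q.A} {p : PathDat Q} (h : Q.tgt a = p.1) :
    Ok Q (extR Q a p) ↔ Ok Q p := by
  rcases p with ⟨v, l⟩
  simp only at h
  simp only [ok_iff, extR, List.isChain_cons, List.head?_cons, Option.mem_def,
    Option.some.injEq, forall_eq', and_true, h]
  exact ⟨fun ⟨h1, h2⟩ => ⟨h2, fun y hy => (h1 y hy).symm⟩,
    fun ⟨h1, h2⟩ => ⟨fun y hy => (h2 y hy).symm, h1⟩⟩

lemma inB_extL_iff {b : Q.A} {p : PathDat Q} :
    InB Q R (extL Q b p) ↔ InB Q R p ∧ ptgt Q p = Q.src b ∧ ∀ z ∈ p.2.getLast?, (z, b) ∉ R := by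
  rw [inB_iff, inB_iff, ok_extL_iff]
  simp only [extL, List.isChain_append_singleton_iff]
  tauto

lemma inG_extL_iff {b : Q.A} {p : PathDat Q} :
    InG Q R (extL Q b p) ↔ InG Q R p ∧ ptgt Q p = Q.src b ∧ ∀ z ∈ p.2.getLast?, (z, b) ∈ R := by
  rw [inG_iff, inG_iff, ok_extL_iff]
  simp only [extL, List.isChain_append_singleton_iff]
  tauto

lemma inB_extR_iff {a : Q.A} {p : PathDat Q} (h : Q.tgt a = p.1) :
    InB Q R (extR Q a p) ↔ InB Q R p ∧ ∀ z ∈ p.2.head?, (a, z) ∉ R := by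
  rw [inB_iff, inB_iff, ok_extR_iff h]
  simp only [extR, List.isChain_cons]
  tauto

lemma inG_extR_iff {a : Q.A} {p : PathDat Q} (h : Q.tgt a = p.1) :
    InG Q R (extR Q a p) ↔ InG Q R p ∧ ∀ z ∈ p.2.head?, (a, z) ∈ R := by
  rw [inG_iff, inG_iff, ok_extR_iff h]
  simp only [extR, List.isChain_cons]
  tauto

lemma gbMem_zero_iff {v : Q.V} {β : List Q.A} :
    GBmem Q R 0 ((v, []), (v, β)) ↔ InB Q R (v, β) ∧ ptgt Q (v, β) = v := by
  simp [GBmem, inG_iff, ok_iff, Par, plen, psrc, ptgt, eq_comm]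

lemma inG_arrow (c : Q.A) : InG Q R (Q.src c, [c]) := by
  simp [inG_iff, ok_iff]

lemma cocomplete_of_inB_extL {c : Q.A} {p : PathDat Q} (h : InB Q R (extL Q c p))
    (hc : p.2.head? = some c) : Cocomplete Q R p := by
  obtain ⟨hp, htgt, hrel⟩ := inB_extL_iff.1 h
  have hsrc : Q.src c = p.1 := hp.1.2 c hc
  have hne : p.2 ≠ [] := by rintro h; simp [h] at hc
  refine ⟨⟨hp.1, hne, (htgt.trans hsrc).symm⟩, ?_⟩
  obtain ⟨⟨hchain, hhead⟩, hchainR⟩ := hp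
  have hjoin : ∀ x ∈ p.2.getLast?, ∀ y ∈ p.2.head?, Q.tgt x = Q.src y ∧ (x, y) ∉ R :=
    fun x hx y hy => by
      obtain rfl : y = c := Option.mem_unique hy hc
      exact ⟨(ptgt_of_getLast? hx).symm.trans htgt, hrel x hx⟩
  simp only [inB_iff, ok_iff, powP, powL, List.append_nil, List.isChain_append,
    List.head?_append_of_ne_nil _ hne]
  exact ⟨⟨⟨hchain, hchain, fun x hx y hy => (hjoin x hx y hy).1⟩, hhead⟩,
    hchainR, hchainR, fun x hx y hy => (hjoin x hx y hy).2⟩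

lemma gMax_arrow_iff {c : Q.A} :
    GMax Q R (Q.src c, [c]) ↔
      (∀ b, Q.tgt c = Q.src b → (c, b) ∉ R) ∧ ∀ a, Q.tgt a = Q.src c → (a, c) ∉ R := by
  refine ⟨fun h => ⟨fun b hb hcb => ?_, fun a ha hac => ?_⟩, fun ⟨hL, hR⟩ => ⟨inG_arrow c, ?_⟩⟩
  · have hG : InG Q R (extL Q b (Q.src c, [c])) := inG_extL_iff.2 ⟨inG_arrow c, hb, by simpa⟩
    simpa [extL] using h.2 _ hG ⟨[], [b], rfl⟩
  · have hG : InG Q R (extR Q a (Q.src c, [c])) := (inG_extR_iff ha).2 ⟨inG_arrow c, by simpa⟩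
    simpa [extR] using h.2 _ hG ⟨[a], [], rfl⟩
  · rintro q hq ⟨s, t, hst⟩
    obtain ⟨hok, hrel⟩ := inG_iff.1 hq
    have hpair : ∀ x y, [x, y] <:+: q.2 → Q.tgt x = Q.src y ∧ (x, y) ∈ R := fun x y hxy =>
      ⟨(List.isChain_pair (R := fun a b => Q.tgt a = Q.src b)).1 ((ok_iff.1 hok).1.infix hxy),
        List.isChain_pair.1 (hrel.infix hxy)⟩
    rcases t with _ | ⟨y, t⟩
    · rcases s.eq_nil_or_concat with rfl | ⟨s, w, rfl⟩
      · simpa using hst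
      · obtain ⟨hw, hwc⟩ := hpair w c ⟨s, [], by simpa using hst⟩
        exact absurd hwc (hR w hw)
    · obtain ⟨hy, hcy⟩ := hpair c y ⟨s, t, by simpa using hst⟩
      exact absurd hcy (hL y hy)

end Paths

section Extensions

variable {Q : Quiv} {R : Set (Q.A × Q.A)} {m : ℕ} {x : PathDat Q × PathDat Q}

def extendLeft (b : Q.A) (x : PathDat Q × PathDat Q) : PathDat Q × PathDat Q :=
  (extL Q b x.1, extL Q b x.2)

def extendRight (a : Q.A) (x : PathDat Q × PathDat Q) : PathDat Q × PathDat Q :=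
  (extR Q a x.1, extR Q a x.2)

-- Reducible, so that the decidability instances in `dB_eq` are the ones chosen in `dB`.
abbrev IsLeftExt (R : Set (Q.A × Q.A)) (m : ℕ) (x : PathDat Q × PathDat Q) (b : Q.A) : Prop :=
  GBmem Q R (m + 1) (extendLeft b x)

abbrev IsRightExt (R : Set (Q.A × Q.A)) (m : ℕ) (x : PathDat Q × PathDat Q) (a : Q.A) : Prop :=
  Q.tgt a = psrc Q x.1 ∧ GBmem Q R (m + 1) (extendRight a x)

lemma isLeftExt_iff (hx : GBmem Q R m x) {b : Q.A} :
    IsLeftExt R m x b ↔ ptgt Q x.1 = Q.src b ∧ (∀ z ∈ x.1.2.getLast?, (z, b) ∈ R) ∧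
      ∀ z ∈ x.2.2.getLast?, (z, b) ∉ R := by
  obtain ⟨hγ, hlen, hα, hsrc, htgt⟩ := hx
  simp only [IsLeftExt, GBmem, extendLeft]
  rw [inG_extL_iff, inB_extL_iff, ← htgt]
  simp only [Par, ptgt_extL]
  simp only [plen, psrc, extL, List.length_append, List.length_singleton]
  simp only [plen, psrc] at hlen hsrc
  tauto

lemma isRightExt_iff (hx : GBmem Q R m x) {a : Q.A} :
    IsRightExt R m x a ↔ Q.tgt a = psrc Q x.1 ∧ (∀ z ∈ x.1.2.head?, (a, z) ∈ R) ∧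
      ∀ z ∈ x.2.2.head?, (a, z) ∉ R := by
  obtain ⟨hγ, hlen, hα, hsrc, htgt⟩ := hx
  simp only [IsRightExt, and_congr_right_iff]
  intro ha
  have ha' : Q.tgt a = x.2.1 := ha.trans hsrc
  simp only [GBmem, extendRight]
  rw [inG_extR_iff ha, inB_extR_iff ha']
  simp only [Par, ptgt_extR ha, ptgt_extR ha']
  simp only [plen, psrc, extR, List.length_cons]
  simp only [plen] at hlen
  tauto

end Extensions

section SumSingle

variable {ι X M : Type} [Fintype ι] [AddCommMonoid M] {P : ι → Prop} [DecidablePred P]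
  (f : ∀ i, P i → X) (v : M)

lemma sum_dite_single_of_unique {i₀ : ι} (h₀ : P i₀) (huniq : ∀ i, P i → i = i₀) :
    (∑ i, if h : P i then Finsupp.single (f i h) v else 0) = Finsupp.single (f i₀ h₀) v := by
  rw [Finset.sum_eq_single_of_mem i₀ (Finset.mem_univ i₀), dif_pos h₀]
  exact fun i _ hi => dif_neg fun h => hi (huniq i h)

lemma sum_dite_single_of_forall_not (hP : ∀ i, ¬ P i) :
    (∑ i, if h : P i then Finsupp.single (f i h) v else 0) = 0 :=
  Finset.sum_eq_zero fun i _ => dif_neg (hP i)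

lemma sum_dite_single_apply_of_unique {e : X} {i₀ : ι} (h₀ : P i₀) (he : f i₀ h₀ = e)
    (huniq : ∀ i h, f i h = e → i = i₀) :
    (∑ i, if h : P i then Finsupp.single (f i h) v else 0) e = v := by
  classical
  rw [Finsupp.finsetSum_apply, Finset.sum_eq_single_of_mem i₀ (Finset.mem_univ i₀), dif_pos h₀,
    he, Finsupp.single_eq_same]
  intro i _ hi
  split_ifs with h
  · exact Finsupp.single_eq_of_ne fun hie => hi (huniq i h hie.symm)
  · rfl

lemma sum_dite_single_apply_of_forall_ne {e : X} (hne : ∀ i h, f i h ≠ e) :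
    (∑ i, if h : P i then Finsupp.single (f i h) v else 0) e = 0 := by
  classical
  rw [Finsupp.finsetSum_apply]
  refine Finset.sum_eq_zero fun i _ => ?_
  split_ifs with h
  · exact Finsupp.single_eq_of_ne (hne i h).symm
  · rfl

end SumSingle

section Differential

variable {k : Type} [Field k] {Q : Quiv} {R : Set (Q.A × Q.A)} {m : ℕ}

open Classical

lemma dB_eq (x : GB Q R m) :
    dB k Q R m x =
      (∑ b : Q.A, if h : IsLeftExt R m x.val b then Finsupp.single ⟨_, h⟩ (1 : k) else 0) -
        (-1 : k) ^ m •
          ∑ a : Q.A, if h : IsRightExt R m x.val a then Finsupp.single ⟨_, h.2⟩ (1 : k) else 0 :=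
  rfl

lemma dLin_single (x : GB Q R m) : dLin k Q R m (Finsupp.single x 1) = dB k Q R m x := by
  simp [dLin]

lemma extendLeft_injective (x : PathDat Q × PathDat Q) :
    Function.Injective fun b : Q.A => extendLeft b x := fun b b' h => by
  simpa [extendLeft, extL] using congrArg (fun y => y.1.2) h

lemma extendRight_injective (x : PathDat Q × PathDat Q) :
    Function.Injective fun a : Q.A => extendRight a x := fun a a' h => by
  simpa [extendRight, extR] using congrArg (fun y => y.1.2) h

lemma dB_eq_zero_of_forall_not (x : GB Q R m) (hL : ∀ b, ¬ IsLeftExt R m x.val b)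
    (hR : ∀ a, ¬ IsRightExt R m x.val a) : dB k Q R m x = 0 := by
  rw [dB_eq, sum_dite_single_of_forall_not _ _ hL, sum_dite_single_of_forall_not _ _ hR,
    smul_zero, sub_zero]

lemma dB_eq_of_unique (x : GB Q R m) {a b : Q.A}
    (hb : IsLeftExt R m x.val b) (hbu : ∀ b', IsLeftExt R m x.val b' → b' = b)
    (ha : IsRightExt R m x.val a) (hau : ∀ a', IsRightExt R m x.val a' → a' = a) :
    dB k Q R m x = Finsupp.single ⟨_, hb⟩ 1 - (-1 : k) ^ m • Finsupp.single ⟨_, ha.2⟩ 1 := by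
  rw [dB_eq, sum_dite_single_of_unique _ _ hb hbu, sum_dite_single_of_unique _ _ ha hau]

lemma dB_eq_of_unique_left (x : GB Q R m) {b : Q.A}
    (hb : IsLeftExt R m x.val b) (hbu : ∀ b', IsLeftExt R m x.val b' → b' = b)
    (hR : ∀ a, ¬ IsRightExt R m x.val a) :
    dB k Q R m x = Finsupp.single ⟨_, hb⟩ 1 := by
  rw [dB_eq, sum_dite_single_of_unique _ _ hb hbu, sum_dite_single_of_forall_not _ _ hR,
    smul_zero, sub_zero]

lemma dB_eq_of_unique_right (x : GB Q R m) {a : Q.A}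
    (ha : IsRightExt R m x.val a) (hau : ∀ a', IsRightExt R m x.val a' → a' = a)
    (hL : ∀ b, ¬ IsLeftExt R m x.val b) :
    dB k Q R m x = -((-1 : k) ^ m • Finsupp.single ⟨_, ha.2⟩ 1) := by
  rw [dB_eq, sum_dite_single_of_unique _ _ ha hau, sum_dite_single_of_forall_not _ _ hL,
    zero_sub]

lemma dB_apply_extendLeft (x : GB Q R m) {b : Q.A} (hb : IsLeftExt R m x.val b)
    (hR : ∀ a, IsRightExt R m x.val a → extendRight a x.val ≠ extendLeft b x.val) :
    dB k Q R m x ⟨_, hb⟩ = 1 := by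
  rw [dB_eq, Finsupp.sub_apply, Finsupp.smul_apply,
    sum_dite_single_apply_of_unique _ _ hb rfl ?uniq,
    sum_dite_single_apply_of_forall_ne _ _ ?ne, smul_zero, sub_zero]
  case uniq => exact fun b' _ h => extendLeft_injective _ (congrArg Subtype.val h)
  case ne => exact fun a ha h => hR a ha (congrArg Subtype.val h)

lemma dB_apply_extendRight (x : GB Q R m) {a : Q.A} (ha : IsRightExt R m x.val a)
    (hL : ∀ b, IsLeftExt R m x.val b → extendLeft b x.val ≠ extendRight a x.val) :
    dB k Q R m x ⟨_, ha.2⟩ = -(-1 : k) ^ m := by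
  rw [dB_eq, Finsupp.sub_apply, Finsupp.smul_apply,
    sum_dite_single_apply_of_forall_ne _ _ ?ne,
    sum_dite_single_apply_of_unique _ _ ha rfl ?uniq, smul_eq_mul, mul_one, zero_sub]
  case uniq => exact fun a' _ h => extendRight_injective _ (congrArg Subtype.val h)
  case ne => exact fun b hb h => hL b hb (congrArg Subtype.val h)

lemma dB_apply_extendLeft_of_eq (x : GB Q R m) {a b : Q.A} (hb : IsLeftExt R m x.val b)
    (ha : IsRightExt R m x.val a) (heq : extendRight a x.val = extendLeft b x.val) :
    dB k Q R m x ⟨_, hb⟩ = 1 - (-1 : k) ^ m := by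
  rw [dB_eq, Finsupp.sub_apply, Finsupp.smul_apply,
    sum_dite_single_apply_of_unique _ _ hb rfl ?uniqL,
    sum_dite_single_apply_of_unique _ _ ha (Subtype.ext heq) ?uniqR, smul_eq_mul, mul_one]
  case uniqL => exact fun b' _ h => extendLeft_injective _ (congrArg Subtype.val h)
  case uniqR =>
    exact fun a' _ h => extendRight_injective _ (congrArg Subtype.val h |>.trans heq.symm)

end Differential

section RankOne

variable {k : Type} [Field k] {Q : Quiv} {R : Set (Q.A × Q.A)} {c : Q.A} {l : List Q.A}

lemma exists_eq_of_gbMem_one {x : PathDat Q × PathDat Q} (hx : GBmem Q R 1 x) :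
    ∃ c l, x = ((Q.src c, [c]), (Q.src c, l)) := by
  obtain ⟨⟨⟨_, hsrc⟩, _⟩, hlen, _, hpar, _⟩ := hx
  obtain ⟨c, hc⟩ := List.length_eq_one_iff.mp hlen
  have hc' : Q.src c = x.1.1 := hsrc c (by simp [hc])
  refine ⟨c, x.2.2, ?_⟩
  rcases x with ⟨⟨v, γ⟩, ⟨w, α⟩⟩
  simp only [psrc] at hc hc' hpar
  subst hc hc' hpar
  rfl

lemma tgt_of_mem_getLast? (hx : GBmem Q R 1 ((Q.src c, [c]), (Q.src c, l))) {z : Q.A}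
    (hz : z ∈ l.getLast?) : Q.tgt z = Q.tgt c := by
  have htgt := hx.2.2.2.2
  rwa [ptgt_of_getLast? (p := (Q.src c, [c])) rfl, ptgt_of_getLast? hz, eq_comm] at htgt

lemma src_of_mem_head? (hx : GBmem Q R 1 ((Q.src c, [c]), (Q.src c, l))) {z : Q.A}
    (hz : z ∈ l.head?) : Q.src z = Q.src c :=
  hx.2.2.1.1.2 z hz

lemma isLeftExt_one_iff (hx : GBmem Q R 1 ((Q.src c, [c]), (Q.src c, l))) {b : Q.A} :
    IsLeftExt R 1 ((Q.src c, [c]), (Q.src c, l)) b ↔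
      Q.tgt c = Q.src b ∧ (c, b) ∈ R ∧ ∀ z ∈ l.getLast?, (z, b) ∉ R := by
  simp [isLeftExt_iff hx, ptgt]

lemma isRightExt_one_iff (hx : GBmem Q R 1 ((Q.src c, [c]), (Q.src c, l))) {a : Q.A} :
    IsRightExt R 1 ((Q.src c, [c]), (Q.src c, l)) a ↔
      Q.tgt a = Q.src c ∧ (a, c) ∈ R ∧ ∀ z ∈ l.head?, (a, z) ∉ R := by
  simp [isRightExt_iff hx, psrc]

lemma forall_not_isLeftExt_one_iff (hg : IsGentle Q R)
    (hx : GBmem Q R 1 ((Q.src c, [c]), (Q.src c, l))) :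
    (∀ b, ¬ IsLeftExt R 1 ((Q.src c, [c]), (Q.src c, l)) b) ↔
      ∀ b, Q.tgt c = Q.src b → (c, b) ∈ R → l.getLast? = some c := by
  simp only [isLeftExt_one_iff hx, not_and, not_forall, not_not]
  refine forall_congr' fun b => imp_congr_right fun hcb => imp_congr_right fun hcbR =>
    ⟨fun ⟨z, hz, hzb⟩ => ?_, fun h => ⟨c, h, hcbR⟩⟩
  have hzc : z = c :=
    hg.uniqRelBefore b ⟨(tgt_of_mem_getLast? hx hz).trans hcb, hzb⟩ ⟨hcb, hcbR⟩
  exact hzc ▸ hz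

lemma forall_not_isRightExt_one_iff (hg : IsGentle Q R)
    (hx : GBmem Q R 1 ((Q.src c, [c]), (Q.src c, l))) :
    (∀ a, ¬ IsRightExt R 1 ((Q.src c, [c]), (Q.src c, l)) a) ↔
      ∀ a, Q.tgt a = Q.src c → (a, c) ∈ R → l.head? = some c := by
  simp only [isRightExt_one_iff hx, not_and, not_forall, not_not]
  refine forall_congr' fun a => imp_congr_right fun hac => imp_congr_right fun hacR =>
    ⟨fun ⟨z, hz, haz⟩ => ?_, fun h => ⟨c, h, hacR⟩⟩
  have hzc : z = c :=
    hg.uniqRelAfter a ⟨hac.trans (src_of_mem_head? hx hz).symm, haz⟩ ⟨hac, hacR⟩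
  exact hzc ▸ hz

lemma eq_loop_of_extendRight_eq_extendLeft (hx : GBmem Q R 1 ((Q.src c, [c]), (Q.src c, l)))
    {a b : Q.A} (hb : IsLeftExt R 1 ((Q.src c, [c]), (Q.src c, l)) b)
    (heq : extendRight a ((Q.src c, [c]), (Q.src c, l)) =
      extendLeft b ((Q.src c, [c]), (Q.src c, l))) :
    Q.src c = Q.tgt c ∧ (c, c) ∈ R ∧ l = [] := by
  simp only [extendRight, extendLeft, extR, extL, Prod.mk.injEq, List.cons_append,
    List.nil_append, List.cons.injEq, and_true] at heq
  obtain ⟨⟨-, rfl, rfl⟩, -, hl⟩ := heq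
  obtain ⟨hloop, hcc, hlast⟩ := (isLeftExt_one_iff hx).1 hb
  refine ⟨hloop.symm, hcc, ?_⟩
  by_contra hne
  exact hlast a (List.getLast?_eq_of_cons_eq_append_singleton hl hne) hcc

lemma loop_or_forall_not_ext_of_dB_eq_zero (hx : GBmem Q R 1 ((Q.src c, [c]), (Q.src c, l)))
    (h : dB k Q R 1 ⟨_, hx⟩ = 0) :
    (ringChar k = 2 ∧ Q.src c = Q.tgt c ∧ (c, c) ∈ R ∧ l = []) ∨
      ((∀ b, ¬ IsLeftExt R 1 ((Q.src c, [c]), (Q.src c, l)) b) ∧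
        ∀ a, ¬ IsRightExt R 1 ((Q.src c, [c]), (Q.src c, l)) a) := by
  set x : GB Q R 1 := ⟨_, hx⟩
  have hloop : ∀ a b, IsRightExt R 1 x.val a → IsLeftExt R 1 x.val b →
      extendRight a x.val = extendLeft b x.val →
      ringChar k = 2 ∧ Q.src c = Q.tgt c ∧ (c, c) ∈ R ∧ l = [] := fun a b ha hb heq => by
    have h2 := dB_apply_extendLeft_of_eq (k := k) x hb ha heq
    rw [h, Finsupp.coe_zero, Pi.zero_apply] at h2
    exact ⟨neg_one_eq_one_iff.1 (by linear_combination h2),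
      eq_loop_of_extendRight_eq_extendLeft hx hb heq⟩
  by_cases hL : ∃ b, IsLeftExt R 1 x.val b
  · obtain ⟨b, hb⟩ := hL
    obtain ⟨a, ha, heq⟩ :
        ∃ a, IsRightExt R 1 x.val a ∧ extendRight a x.val = extendLeft b x.val := by
      by_contra! hR
      simpa [h] using dB_apply_extendLeft (k := k) x hb hR
    exact Or.inl (hloop a b ha hb heq)
  by_cases hR : ∃ a, IsRightExt R 1 x.val a
  · obtain ⟨a, ha⟩ := hR
    obtain ⟨b, hb, heq⟩ :
        ∃ b, IsLeftExt R 1 x.val b ∧ extendLeft b x.val = extendRight a x.val := by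
      by_contra! hL
      simpa [h] using dB_apply_extendRight (k := k) x ha hL
    exact Or.inl (hloop a b ha hb heq.symm)
  exact Or.inr ⟨fun b hb => hL ⟨b, hb⟩, fun a ha => hR ⟨a, ha⟩⟩

end RankOne

section Coboundaries

variable {k : Type} [Field k] {Q : Quiv} {R : Set (Q.A × Q.A)} {c : Q.A} {β : List Q.A}

lemma exists_dLin_eq_of_getLast? (hg : IsGentle Q R)
    (hx : GBmem Q R 1 ((Q.src c, [c]), (Q.src c, β ++ [c])))
    (hhead : (β ++ [c]).head? ≠ some c) (hA : ∀ a, Q.tgt a = Q.src c → (a, c) ∉ R) :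
    ∃ y : Coch k Q R 0, dLin k Q R 0 y = Finsupp.single ⟨_, hx⟩ 1 := by
  have hβ : β ≠ [] := by rintro rfl; simp at hhead
  obtain ⟨z, hz⟩ : ∃ z, β.getLast? = some z := Option.isSome_iff_exists.1 (by simpa)
  obtain ⟨w, hw⟩ : ∃ w, β.head? = some w := Option.isSome_iff_exists.1 (by simpa)
  obtain ⟨hβB, hβtgt, hzc⟩ := (inB_extL_iff (p := (Q.src c, β))).1 hx.2.2.1
  have hy : GBmem Q R 0 ((Q.src c, []), (Q.src c, β)) := gbMem_zero_iff.2 ⟨hβB, hβtgt⟩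
  have htz : Q.tgt z = Q.src c := (ptgt_of_getLast? hz).symm.trans hβtgt
  refine ⟨Finsupp.single ⟨_, hy⟩ 1, ?_⟩
  rw [dLin_single, dB_eq_of_unique_left (b := c) _ hx ?uniq ?noRight]
  · rfl
  case uniq =>
    intro b hb
    obtain ⟨hsb, -, hzb⟩ := (isLeftExt_iff hy).1 hb
    exact hg.uniqNotRelAfter z ⟨htz.trans hsb, hzb z hz⟩ ⟨htz, hzc z hz⟩
  case noRight =>
    intro a ha
    obtain ⟨hta, -, haw⟩ := (isRightExt_iff hy).1 ha
    have haz : a = z := hg.uniqNotRelBefore c ⟨hta, hA a hta⟩ ⟨htz, hzc z hz⟩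
    subst haz
    have hwc : w = c := hg.uniqNotRelAfter a
      ⟨htz.trans (hβB.1.2 w hw).symm, haw w hw⟩ ⟨htz, hzc a hz⟩
    exact hhead (by simp [List.head?_append_of_ne_nil _ hβ, hw, hwc])

lemma exists_dLin_eq_of_head? (hg : IsGentle Q R)
    (hx : GBmem Q R 1 ((Q.src c, [c]), (Q.src c, c :: β)))
    (hlast : (c :: β).getLast? ≠ some c) (hB : ∀ b, Q.tgt c = Q.src b → (c, b) ∉ R) :
    ∃ y : Coch k Q R 0, dLin k Q R 0 y = Finsupp.single ⟨_, hx⟩ 1 := by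
  have hβ : β ≠ [] := by rintro rfl; simp at hlast
  obtain ⟨z, hz⟩ : ∃ z, β.getLast? = some z := Option.isSome_iff_exists.1 (by simpa)
  obtain ⟨w, hw⟩ : ∃ w, β.head? = some w := Option.isSome_iff_exists.1 (by simpa)
  obtain ⟨hβB, hcw⟩ := (inB_extR_iff (p := (Q.tgt c, β)) rfl).1 hx.2.2.1
  have hβtgt : ptgt Q (Q.tgt c, β) = Q.tgt c :=
    (ptgt_extR (p := (Q.tgt c, β)) rfl).symm.trans hx.2.2.2.2.symm
  have hy : GBmem Q R 0 ((Q.tgt c, []), (Q.tgt c, β)) := gbMem_zero_iff.2 ⟨hβB, hβtgt⟩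
  have hsw : Q.tgt c = Q.src w := (hβB.1.2 w hw).symm
  refine ⟨-Finsupp.single ⟨_, hy⟩ 1, ?_⟩
  rw [map_neg, dLin_single, dB_eq_of_unique_right (a := c) _ ⟨rfl, hx⟩ ?uniq ?noLeft,
    pow_zero, one_smul, neg_neg]
  · rfl
  case uniq =>
    intro a ha
    obtain ⟨hta, -, haw⟩ := (isRightExt_iff hy).1 ha
    exact hg.uniqNotRelBefore w ⟨hta.trans hsw, haw w hw⟩ ⟨hsw, hcw w hw⟩
  case noLeft =>
    intro b hb
    obtain ⟨hsb, -, hzb⟩ := (isLeftExt_iff hy).1 hb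
    have hbw : b = w := hg.uniqNotRelAfter c ⟨hsb, hB b hsb⟩ ⟨hsw, hcw w hw⟩
    subst hbw
    have htz : Q.tgt z = Q.src b := (ptgt_of_getLast? hz).symm.trans (hβtgt.trans hsb)
    have hzc : z = c := hg.uniqNotRelBefore b ⟨htz, hzb z hz⟩ ⟨hsw, hcw b hw⟩
    exact hlast (by simp [List.getLast?_cons_of_ne_nil hβ, hz, hzc])

end Coboundaries

section Classification

variable {k : Type} [Field k] {Q : Quiv} {R : Set (Q.A × Q.A)} {c : Q.A} {l : List Q.A}

lemma dB_loop_eq_zero (hg : IsGentle Q R) (hx : GBmem Q R 1 ((Q.src c, [c]), (Q.src c, [])))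
    (hcc : (c, c) ∈ R) (hchar : ringChar k = 2) : dB k Q R 1 ⟨_, hx⟩ = 0 := by
  have hloop : Q.tgt c = Q.src c := hx.2.2.2.2
  have hL := (isLeftExt_one_iff hx).2 ⟨hloop, hcc, by simp⟩
  have hR := (isRightExt_one_iff hx).2 ⟨hloop, hcc, by simp⟩
  rw [dB_eq_of_unique _ hL ?uniqL hR ?uniqR, pow_one, neg_one_eq_one_iff.2 hchar, one_smul]
  · exact sub_self _
  case uniqL =>
    intro b hb
    obtain ⟨hcb, hcbR, -⟩ := (isLeftExt_one_iff hx).1 hb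
    exact hg.uniqRelAfter c ⟨hcb, hcbR⟩ ⟨hloop, hcc⟩
  case uniqR =>
    intro a ha
    obtain ⟨hac, hacR, -⟩ := (isRightExt_one_iff hx).1 ha
    exact hg.uniqRelBefore c ⟨hac, hacR⟩ ⟨hloop, hcc⟩

lemma dB_eq_zero_of_rankOneAlternatives (hg : IsGentle Q R)
    (hx : GBmem Q R 1 ((Q.src c, [c]), (Q.src c, l)))
    (h : RankOneAlternatives k Q R ⟨_, hx⟩) : dB k Q R 1 ⟨_, hx⟩ = 0 := by
  have hzero : (∀ b, Q.tgt c = Q.src b → (c, b) ∈ R → l.getLast? = some c) →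
      (∀ a, Q.tgt a = Q.src c → (a, c) ∈ R → l.head? = some c) → dB k Q R 1 ⟨_, hx⟩ = 0 :=
    fun hL hR => dB_eq_zero_of_forall_not _ ((forall_not_isLeftExt_one_iff hg hx).2 hL)
      ((forall_not_isRightExt_one_iff hg hx).2 hR)
  rcases h with ⟨hchar, b, -, hbb, heq⟩ | ⟨c', α, hmax, -, -, heq⟩ | ⟨c', δ, -, hδ, heq⟩ | ⟨c', heq⟩
    <;> simp only [Prod.mk.injEq, List.cons.injEq, and_true] at heq
  · obtain ⟨⟨-, rfl⟩, -, rfl⟩ := heq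
    exact dB_loop_eq_zero hg hx hbb hchar
  · obtain ⟨⟨-, rfl⟩, -⟩ := heq
    obtain ⟨hL, hR⟩ := gMax_arrow_iff.1 hmax
    exact hzero (fun b h1 h2 => absurd h2 (hL b h1)) (fun a h1 h2 => absurd h2 (hR a h1))
  · obtain ⟨⟨-, rfl⟩, -, rfl⟩ := heq
    exact hzero (fun _ _ _ => by simp) (fun _ _ _ => by simp [hδ])
  · obtain ⟨⟨-, rfl⟩, -, rfl⟩ := heq
    exact hzero (fun _ _ _ => rfl) (fun _ _ _ => rfl)

lemma rankOneAlternatives_of_forall_not_ext (hg : IsGentle Q R)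
    (hx : GBmem Q R 1 ((Q.src c, [c]), (Q.src c, l)))
    (hL : ∀ b, ¬ IsLeftExt R 1 ((Q.src c, [c]), (Q.src c, l)) b)
    (hR : ∀ a, ¬ IsRightExt R 1 ((Q.src c, [c]), (Q.src c, l)) a)
    (hncob : ¬∃ y : Coch k Q R 0, dLin k Q R 0 y = Finsupp.single ⟨_, hx⟩ 1) :
    RankOneAlternatives k Q R ⟨_, hx⟩ := by
  have hlast := (forall_not_isLeftExt_one_iff hg hx).1 hL
  have hhead := (forall_not_isRightExt_one_iff hg hx).1 hR
  by_cases hh : l.head? = some c <;> by_cases hl : l.getLast? = some c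
  · obtain ⟨β, rfl⟩ : ∃ β, l = β ++ [c] := ⟨_, (List.dropLast_append_getLast? c hl).symm⟩
    rcases eq_or_ne β [] with rfl | hβ
    · exact Or.inr (Or.inr (Or.inr ⟨c, rfl⟩))
    · have hβc : β.head? = some c := by rwa [List.head?_append_of_ne_nil _ hβ] at hh
      exact Or.inr (Or.inr (Or.inl
        ⟨c, (Q.src c, β), cocomplete_of_inB_extL hx.2.2.1 hβc, hβc, rfl⟩))
  · obtain ⟨β, rfl⟩ : ∃ β, l = c :: β := ⟨_, List.eq_cons_of_mem_head? hh⟩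
    exact absurd (exists_dLin_eq_of_head? hg hx hl fun b h1 h2 => hl (hlast b h1 h2)) hncob
  · obtain ⟨β, rfl⟩ : ∃ β, l = β ++ [c] := ⟨_, (List.dropLast_append_getLast? c hl).symm⟩
    exact absurd (exists_dLin_eq_of_getLast? hg hx hh fun a h1 h2 => hh (hhead a h1 h2)) hncob
  · exact Or.inr (Or.inl ⟨c, (Q.src c, l), gMax_arrow_iff.2
      ⟨fun b h1 h2 => hl (hlast b h1 h2), fun a h1 h2 => hh (hhead a h1 h2)⟩, hh, hl, rfl⟩)

end Classification

/-- Let `(Q, R)` be a gentle presentation and `u ∈ Γ₁ ∥ B`.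
If `u` is a cocycle and not a coboundary, then one of the four alternatives
holds: (i) `char k = 2` and `u = (b, s(b))` for a loop `b` with `b² ∈ R`;
(ii) `u = (c, α)` with `c` a `Γ`-maximal arrow and `α ∈ B` neither beginning nor
ending with `c`; (iii) `u = (c, cδ)` with `δ` a cocomplete cycle starting with
`c`; (iv) `u = (c, c)` for an arrow `c`. Conversely each alternative implies
that `u` is a cocycle. -/
theorem rank_one_one_cocycles (k : Type) [Field k] (Q : Quiv) (R : Set (Q.A × Q.A))
    (hg : IsGentle Q R) (u : GB Q R 1) :
    ((dLin k Q R 1 (Finsupp.single u (1 : k)) = 0 ∧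
        ¬∃ y : Coch k Q R 0, dLin k Q R 0 y = Finsupp.single u (1 : k)) →
      RankOneAlternatives k Q R u) ∧
    (RankOneAlternatives k Q R u → dLin k Q R 1 (Finsupp.single u (1 : k)) = 0) := by
  obtain ⟨x, hx⟩ := u
  obtain ⟨c, l, rfl⟩ := exists_eq_of_gbMem_one hx
  rw [dLin_single]
  refine ⟨fun ⟨hcoc, hncob⟩ => ?_, dB_eq_zero_of_rankOneAlternatives hg hx⟩
  rcases loop_or_forall_not_ext_of_dB_eq_zero hx hcoc with ⟨hchar, hloop, hcc, rfl⟩ | ⟨hL, hR⟩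
  · exact Or.inl ⟨hchar, c, hloop, hcc, rfl⟩
  · exact rankOneAlternatives_of_forall_not_ext hg hx hL hR hncob

end GentleTT
end

section
/- Let (Q,R) be a gentle presentation and let m ≥ 2. If u is an irreducible cocycle in k(Γ_m∥B) of rank r > 1 that is not a coboundary, then: (1) m is even or the characteristic of k is 2; and (2) r divides m and there is a complete cycle C of length m and period r such that u is a nonzero scalar multiple of ⟨C⟩ = Σ_{i=0}^{r−1} (−1)^{im} (rot^i(C), s(rot^i(C))). -/
/-!
Common framework: quivers, paths (as a start vertex together with a list of
composable arrows, listed in order of traversal, so that the paper's path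
`c_m ⋯ c_1` corresponds to the list `[c_1, …, c_m]`), gentle and quadratic
monomial presentations, the cochain complex `k(Γ ∥ B)` and the chain complex
`k(B ⊙ Γ)` of the paper.
-/

namespace GentleTT

/-- An irreducible cocycle: a cocycle that is not the sum of two nonzero
disjoint cocycles (disjoint = no common basis element in their supports). -/
def IsIrreducibleCocycle (k : Type) [Field k] (Q : Quiv) (R : Set (Q.A × Q.A))
    (m : ℕ) (u : Coch k Q R m) : Prop :=
  dLin k Q R m u = 0 ∧
  ¬∃ v w : Coch k Q R m, v ≠ 0 ∧ w ≠ 0 ∧ dLin k Q R m v = 0 ∧ dLin k Q R m w = 0 ∧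
      Disjoint v.support w.support ∧ u = v + w

/-!
In degree `m ≥ 1` a basis pair `y` of degree `m + 1` is `(bγ, bα)` for at most one basis pair
`x = (γ, α)` and `(γ'a, α'a)` for at most one `x' = (γ', α')`; call `x` and `x'` linked. The
coefficient of `y` in `d u` is `u x - (-1)^m u x'`, so a cocycle satisfies `u x = (-1)^m u x'`.
Gentleness links each pair to at most one pair on either side, and irreducibility forces the
support of `u` to be closed under linking. If a pair `(γ, e)` with trivial `α` lies in the
support, then `γ` is a complete cycle `C`, linking is rotation of `C`, and the support is the
rotation orbit of `(C, e)`: this gives `u = u(C, e) • ⟨C⟩`, and going once around the orbit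
gives `((-1)^m)^r = 1`. Otherwise two linked pairs of the support are the two one-arrow
extensions of a pair `w` of degree `m - 1`, they make up the whole support, and `u` is a
multiple of `d w`.
-/

theorem _root_.List.isChain_and {α : Type*} {r s : α → α → Prop} {l : List α} :
    l.IsChain (fun a b => r a b ∧ s a b) ↔ l.IsChain r ∧ l.IsChain s := by
  simp only [List.isChain_iff_forall_rel_of_append_cons_cons]
  exact ⟨fun h => ⟨fun _ _ _ _ e => (h e).1, fun _ _ _ _ e => (h e).2⟩,
    fun h _ _ _ _ e => ⟨h.1 e, h.2 e⟩⟩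

section Paths

variable {Q : Quiv} {R : Set (Q.A × Q.A)}

def IsRelation (Q : Quiv) (R : Set (Q.A × Q.A)) (a b : Q.A) : Prop :=
  Q.tgt a = Q.src b ∧ (a, b) ∈ R

theorem Ok.fst_eq {p : PathDat Q} (h : Ok Q p) {a : Q.A} {l : List Q.A} (hp : p.2 = a :: l) :
    p.1 = Q.src a :=
  (h.2 a (by simp [hp])).symm

theorem Ok.tail {p : PathDat Q} (h : Ok Q p) {a : Q.A} {l : List Q.A} (hp : p.2 = a :: l) :
    Ok Q (Q.tgt a, l) := by
  have hc : (a :: l).IsChain (fun a b => Q.tgt a = Q.src b) := hp ▸ h.1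
  exact ⟨hc.tail, fun b hb => (List.isChain_cons.1 hc).1 b hb |>.symm⟩

theorem inG_iff_s7 {p : PathDat Q} :
    InG Q R p ↔ (∀ a ∈ p.2.head?, Q.src a = p.1) ∧ p.2.IsChain (IsRelation Q R) := by
  change (p.2.IsChain (fun a b => Q.tgt a = Q.src b) ∧ _) ∧
    p.2.IsChain (fun a b => (a, b) ∈ R) ↔ _
  rw [show IsRelation Q R = fun a b => Q.tgt a = Q.src b ∧ (a, b) ∈ R from rfl,
    List.isChain_and]
  tauto

theorem ptgt_of_cons {p : PathDat Q} {a : Q.A} {l : List Q.A} (hp : p.2 = a :: l) :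
    ptgt Q p = ptgt Q (Q.tgt a, l) := by
  obtain ⟨v, l'⟩ := p
  subst hp
  cases l with
  | nil => simp [ptgt]
  | cons b l => simp [ptgt, List.getLast?_eq_getLast_of_ne_nil (List.cons_ne_nil b l)]

theorem ptgt_of_concat {p : PathDat Q} {a : Q.A} {l : List Q.A} (hp : p.2 = l ++ [a]) :
    ptgt Q p = Q.tgt a := by
  simp [ptgt, hp]

theorem rotP_of_concat {p : PathDat Q} {a : Q.A} {l : List Q.A} (hp : p.2 = l ++ [a]) :
    rotP Q p = (Q.src a, a :: l) := by
  simp [rotP, hp]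

theorem plen_rotP (p : PathDat Q) : plen Q (rotP Q p) = plen Q p := by
  rcases List.eq_nil_or_concat' p.2 with hp | ⟨l, a, hp⟩
  · simp [rotP, hp]
  · simp [rotP_of_concat hp, plen, hp]

theorem plen_rotI (p : PathDat Q) (i : ℕ) : plen Q (rotI Q i p) = plen Q p := by
  induction i with
  | zero => rfl
  | succ i ih => rw [rotI, Function.iterate_succ_apply', plen_rotP]; exact ih

theorem snd_rotI_append (v : Q.V) (l₁ l₂ : List Q.A) :
    (rotI Q l₂.length (v, l₁ ++ l₂)).2 = l₂ ++ l₁ := by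
  induction l₂ using List.reverseRecOn generalizing v l₁ with
  | nil => simp [rotI]
  | append_singleton l₂ a ih =>
    rw [List.length_append, List.length_singleton, rotI, Function.iterate_succ_apply,
      rotP_of_concat (l := l₁ ++ l₂) (a := a) (by simp)]
    simpa [rotI] using ih (Q.src a) (a :: l₁)

theorem complete_iff {C : PathDat Q} :
    Complete Q R C ↔ C.2 ≠ [] ∧ (∀ a ∈ C.2.head?, Q.src a = C.1) ∧
      (C.2 ++ C.2).IsChain (IsRelation Q R) := by
  obtain ⟨v, l⟩ := C
  have hpow : powP Q (v, l) 2 = (v, l ++ l) := by simp [powP, powL]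
  rcases List.eq_nil_or_concat' l with rfl | ⟨l', a, rfl⟩
  · simp [Complete, IsCycle]
  have hhead : ((l' ++ [a]) ++ (l' ++ [a])).head? = (l' ++ [a]).head? := by simp
  simp only [Complete, IsCycle, hpow, inG_iff_s7, hhead, psrc,
    ptgt_of_concat (rfl : (v, l' ++ [a]).2 = _)]
  constructor
  · rintro ⟨⟨-, hne, -⟩, hhd, hch⟩
    exact ⟨hne, hhd, hch⟩
  · rintro ⟨hne, hhd, hch⟩
    refine ⟨⟨⟨(List.isChain_append.1 hch).1.imp fun _ _ h => h.1, hhd⟩, hne, ?_⟩,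
      hhd, hch⟩
    obtain ⟨c, t, hct⟩ := List.exists_cons_of_ne_nil hne
    have hjunc := (List.isChain_append.1 hch).2.2 a (by simp) c (by simp [hct])
    rw [← hhd c (by simp [hct]), hjunc.1]

end Paths

section CompleteCycles

variable {Q : Quiv} {R : Set (Q.A × Q.A)} {C : PathDat Q}

theorem Complete.inG (hC : Complete Q R C) : InG Q R C := by
  obtain ⟨-, hhd, hch⟩ := complete_iff.1 hC
  exact inG_iff_s7.2 ⟨hhd, hch.left_of_append⟩

theorem Complete.ext {C' : PathDat Q} (hC : Complete Q R C) (hC' : Complete Q R C')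
    (h : C.2 = C'.2) : C = C' := by
  obtain ⟨hne, hhd, -⟩ := complete_iff.1 hC
  obtain ⟨-, hhd', -⟩ := complete_iff.1 hC'
  obtain ⟨c, t, hct⟩ := List.exists_cons_of_ne_nil hne
  exact Prod.ext ((hhd c (by simp [hct])).symm.trans (hhd' c (by simp [← h, hct]))) h

theorem _root_.List.isChain_append_self_append_self {α : Type*} {r : α → α → Prop}
    {l : List α} (h : (l ++ l).IsChain r) : (l ++ l ++ l).IsChain r := by
  obtain ⟨-, hl, hjunc⟩ := List.isChain_append.1 h
  refine List.isChain_append.2 ⟨h, hl, fun a ha b hb => hjunc a ?_ b hb⟩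
  rcases List.eq_nil_or_concat' l with rfl | ⟨l', c, rfl⟩
  · simp at ha
  · rwa [List.getLast?_append_of_ne_nil _ (by simp)] at ha

theorem complete_rotP (hC : Complete Q R C) : Complete Q R (rotP Q C) := by
  obtain ⟨hne, -, hch⟩ := complete_iff.1 hC
  obtain ⟨l, a, hla⟩ := (List.eq_nil_or_concat' C.2).resolve_left hne
  rw [rotP_of_concat hla]
  refine complete_iff.2 ⟨by simp, by simp, (List.isChain_append_self_append_self hch).infix ?_⟩
  exact ⟨l, [a], by simp [hla]⟩

theorem complete_rotI (hC : Complete Q R C) (i : ℕ) : Complete Q R (rotI Q i C) := by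
  induction i with
  | zero => exact hC
  | succ i ih => rw [rotI, Function.iterate_succ_apply']; exact complete_rotP ih

theorem Complete.isPeriodicPt (hC : Complete Q R C) :
    Function.IsPeriodicPt (rotP Q) (plen Q C) C := by
  refine (complete_rotI hC _).ext hC ?_
  simpa [plen] using snd_rotI_append (Q := Q) C.1 [] C.2

theorem periodP_eq_minimalPeriod (p : PathDat Q) :
    periodP Q p = Function.minimalPeriod (rotP Q) p := by
  by_cases hp : p ∈ Function.periodicPts (rotP Q)
  · have hne : {i : ℕ | 1 ≤ i ∧ rotI Q i p = p}.Nonempty := by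
      obtain ⟨n, hn, hper⟩ := hp
      exact ⟨n, hn, hper⟩
    obtain ⟨hpos, hper⟩ := Nat.sInf_mem hne
    exact le_antisymm (Nat.sInf_le ⟨Function.minimalPeriod_pos_of_mem_periodicPts hp,
      Function.isPeriodicPt_minimalPeriod _ _⟩) (Function.IsPeriodicPt.minimalPeriod_le hpos hper)
  · rw [Function.minimalPeriod_eq_zero_of_notMem_periodicPts hp, periodP,
      Nat.sInf_eq_zero]
    right
    ext i
    simp only [Set.mem_ofPred_eq, Set.mem_empty_iff_false, iff_false, not_and]
    exact fun hi hper => hp ⟨i, hi, hper⟩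

theorem Complete.periodP_pos (hC : Complete Q R C) : 0 < periodP Q C := by
  rw [periodP_eq_minimalPeriod]
  refine hC.isPeriodicPt.minimalPeriod_pos ?_
  obtain ⟨hne, -⟩ := complete_iff.1 hC
  simpa [plen, List.length_pos_iff] using hne

theorem Complete.periodP_dvd_plen (hC : Complete Q R C) : periodP Q C ∣ plen Q C := by
  rw [periodP_eq_minimalPeriod]
  exact hC.isPeriodicPt.minimalPeriod_dvd

end CompleteCycles

section BasisPairs

variable {k : Type} [Field k] {Q : Quiv} {R : Set (Q.A × Q.A)} {m n : ℕ}

theorem GB.snd_fst (x : GB Q R m) : x.val.2.1 = x.val.1.1 := x.2.2.2.2.1.symm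

theorem GB.fst_ne_nil (x : GB Q R (n + 1)) : x.val.1.2 ≠ [] := by
  intro h
  have := x.2.2.1
  simp [plen, h] at this

theorem GB.ext_of_lists {x x' : GB Q R (n + 1)} (h₁ : x.val.1.2 = x'.val.1.2)
    (h₂ : x.val.2.2 = x'.val.2.2) : x = x' := by
  obtain ⟨c, t, hct⟩ := List.exists_cons_of_ne_nil (GB.fst_ne_nil x)
  have hv : x.val.1.1 = x'.val.1.1 :=
    (x.2.1.1.fst_eq hct).trans (x'.2.1.1.fst_eq (h₁ ▸ hct)).symm
  refine Subtype.ext (Prod.ext (Prod.ext hv h₁) (Prod.ext ?_ h₂))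
  rw [GB.snd_fst, GB.snd_fst x', hv]

/-- `y = (bγ, bα)` for some arrow `b`, where `x = (γ, α)`. -/
def IsExtL (x : GB Q R m) (y : GB Q R (m + 1)) : Prop :=
  ∃ b, y.val.1.2 = x.val.1.2 ++ [b] ∧ y.val.2.2 = x.val.2.2 ++ [b]

/-- `y = (γa, αa)` for some arrow `a`, where `x = (γ, α)`. -/
def IsExtR (x : GB Q R m) (y : GB Q R (m + 1)) : Prop :=
  ∃ a, y.val.1.2 = a :: x.val.1.2 ∧ y.val.2.2 = a :: x.val.2.2

theorem exists_extL_iff {x : GB Q R (n + 1)} {y : GB Q R (n + 2)} :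
    (∃ b, y.val = (extL Q b x.val.1, extL Q b x.val.2)) ↔ IsExtL x y := by
  refine ⟨fun ⟨b, hy⟩ => ⟨b, (by rw [hy]; rfl), (by rw [hy]; rfl)⟩,
    fun ⟨b, h₁, h₂⟩ => ?_⟩
  obtain ⟨c, t, hct⟩ := List.exists_cons_of_ne_nil (GB.fst_ne_nil x)
  have hv : y.val.1.1 = x.val.1.1 :=
    (y.2.1.1.fst_eq (by rw [h₁, hct]; rfl)).trans (x.2.1.1.fst_eq hct).symm
  refine ⟨b, Prod.ext (Prod.ext hv h₁) (Prod.ext ?_ h₂)⟩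
  show y.val.2.1 = x.val.2.1
  rw [GB.snd_fst, GB.snd_fst x, hv]

theorem exists_extR_iff {x : GB Q R (n + 1)} {y : GB Q R (n + 2)} :
    (∃ a, Q.tgt a = psrc Q x.val.1 ∧ y.val = (extR Q a x.val.1, extR Q a x.val.2)) ↔
      IsExtR x y := by
  refine ⟨fun ⟨a, _, hy⟩ => ⟨a, (by rw [hy]; rfl), (by rw [hy]; rfl)⟩,
    fun ⟨a, h₁, h₂⟩ => ?_⟩
  obtain ⟨c, t, hct⟩ := List.exists_cons_of_ne_nil (GB.fst_ne_nil x)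
  have hv : y.val.1.1 = Q.src a := y.2.1.1.fst_eq h₁
  have hta : Q.tgt a = x.val.1.1 :=
    ((y.2.1.1.tail h₁).fst_eq hct).trans (x.2.1.1.fst_eq hct).symm
  refine ⟨a, hta, Prod.ext (Prod.ext hv h₁) (Prod.ext ?_ h₂)⟩
  show y.val.2.1 = Q.src a
  rw [GB.snd_fst, hv]

theorem dite_single_apply {P : Prop} [Decidable P] {z : PathDat Q × PathDat Q}
    (hz : P → GBmem Q R m z) (y : GB Q R m) :
    (if h : P then Finsupp.single (⟨z, hz h⟩ : GB Q R m) (1 : k) else 0) y =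
      if P ∧ y.val = z then 1 else 0 := by
  by_cases h : P <;> simp [h, Finsupp.single_apply, Subtype.ext_iff, eq_comm]

open scoped Classical in
theorem dB_apply (x : GB Q R (n + 1)) (y : GB Q R (n + 2)) :
    dB k Q R (n + 1) x y =
      (if IsExtL x y then 1 else 0) - (-1) ^ (n + 1) * (if IsExtR x y then 1 else 0) := by
  unfold dB
  simp only [Finsupp.sub_apply, Finsupp.smul_apply, Finsupp.finsetSum_apply, smul_eq_mul,
    dite_single_apply]
  rw [Fintype.sum_ite_eq_ite_exists, Fintype.sum_ite_eq_ite_exists]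
  · have hmem : ∀ z, GBmem Q R (n + 2) z ∧ y.val = z ↔ y.val = z :=
      fun z => ⟨And.right, fun h => ⟨h ▸ y.2, h⟩⟩
    simp only [hmem, and_assoc, exists_extL_iff, exists_extR_iff]
  · rintro a a' ⟨-, ha⟩ ⟨-, ha'⟩
    simpa [extR] using congrArg (fun z => z.1.2) (ha.symm.trans ha')
  · rintro b b' ⟨-, hb⟩ ⟨-, hb'⟩
    simpa [extL] using congrArg (fun z => z.1.2) (hb.symm.trans hb')

theorem IsExtL.inj {x x' : GB Q R (n + 1)} {y : GB Q R (n + 2)} (h : IsExtL x y)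
    (h' : IsExtL x' y) : x = x' := by
  obtain ⟨b, h₁, h₂⟩ := h
  obtain ⟨b', h₁', h₂'⟩ := h'
  exact GB.ext_of_lists (List.append_inj' (h₁.symm.trans h₁') rfl).1
    (List.append_inj' (h₂.symm.trans h₂') rfl).1

theorem IsExtR.inj {x x' : GB Q R (n + 1)} {y : GB Q R (n + 2)} (h : IsExtR x y)
    (h' : IsExtR x' y) : x = x' := by
  obtain ⟨a, h₁, h₂⟩ := h
  obtain ⟨a', h₁', h₂'⟩ := h'
  exact GB.ext_of_lists (List.cons.inj (h₁.symm.trans h₁')).2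
    (List.cons.inj (h₂.symm.trans h₂')).2

theorem IsExtL.unique (hg : IsGentle Q R) {x : GB Q R (n + 1)} {y y' : GB Q R (n + 2)}
    (h : IsExtL x y) (h' : IsExtL x y') : y = y' := by
  obtain ⟨b, h₁, h₂⟩ := h
  obtain ⟨b', h₁', h₂'⟩ := h'
  obtain ⟨l, c, hlc⟩ := (List.eq_nil_or_concat' x.val.1.2).resolve_left (GB.fst_ne_nil x)
  have hrel : ∀ (z : GB Q R (n + 2)) (d : Q.A), z.val.1.2 = x.val.1.2 ++ [d] →
      IsRelation Q R c d := by
    intro z d hz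
    have hch := (inG_iff_s7.1 z.2.1).2
    rw [hz, hlc] at hch
    exact (List.isChain_append.1 hch).2.2 c (by simp) d (by simp)
  obtain rfl : b = b' := hg.uniqRelAfter c (hrel y b h₁) (hrel y' b' h₁')
  exact GB.ext_of_lists (h₁.trans h₁'.symm) (h₂.trans h₂'.symm)

theorem IsExtR.unique (hg : IsGentle Q R) {x : GB Q R (n + 1)} {y y' : GB Q R (n + 2)}
    (h : IsExtR x y) (h' : IsExtR x y') : y = y' := by
  obtain ⟨a, h₁, h₂⟩ := h
  obtain ⟨a', h₁', h₂'⟩ := h'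
  obtain ⟨c, t, hct⟩ := List.exists_cons_of_ne_nil (GB.fst_ne_nil x)
  have hrel : ∀ (z : GB Q R (n + 2)) (d : Q.A), z.val.1.2 = d :: x.val.1.2 →
      IsRelation Q R d c := by
    intro z d hz
    have hch := (inG_iff_s7.1 z.2.1).2
    rw [hz, hct] at hch
    exact (List.isChain_cons_cons.1 hch).1
  obtain rfl : a = a' := hg.uniqRelBefore c (hrel y a h₁) (hrel y' a' h₁')
  exact GB.ext_of_lists (h₁.trans h₁'.symm) (h₂.trans h₂'.symm)

def Linked (x x' : GB Q R m) : Prop := ∃ y : GB Q R (m + 1), IsExtL x y ∧ IsExtR x' y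

theorem Linked.right_unique (hg : IsGentle Q R) {x x₁ x₂ : GB Q R (n + 1)}
    (h₁ : Linked x x₁) (h₂ : Linked x x₂) : x₁ = x₂ := by
  obtain ⟨y, hL, hR⟩ := h₁
  obtain ⟨y', hL', hR'⟩ := h₂
  obtain rfl := hL.unique hg hL'
  exact hR.inj hR'

theorem Linked.left_unique (hg : IsGentle Q R) {x x₁ x₂ : GB Q R (n + 1)}
    (h₁ : Linked x₁ x) (h₂ : Linked x₂ x) : x₁ = x₂ := by
  obtain ⟨y, hL, hR⟩ := h₁
  obtain ⟨y', hL', hR'⟩ := h₂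
  obtain rfl := hR.unique hg hR'
  exact hL.inj hL'

end BasisPairs

section Cocycles

variable {k : Type} [Field k] {Q : Quiv} {R : Set (Q.A × Q.A)} {m n : ℕ}

theorem dLin_apply (u : Coch k Q R m) (y : GB Q R (m + 1)) :
    dLin k Q R m u y = u.sum fun x c => c * dB k Q R m x y := by
  simp [dLin, Finsupp.linearCombination_apply, Finsupp.sum_apply]

theorem isExtL_or_isExtR_of_dB_ne_zero {x : GB Q R (n + 1)} {y : GB Q R (n + 2)}
    (h : dB k Q R (n + 1) x y ≠ 0) : IsExtL x y ∨ IsExtR x y := by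
  by_contra hxy
  rw [not_or] at hxy
  simp [dB_apply, hxy.1, hxy.2] at h

theorem apply_eq_of_linked {u : Coch k Q R (n + 1)} (hdu : dLin k Q R (n + 1) u = 0)
    {x x' : GB Q R (n + 1)} (h : Linked x x') : u x = (-1) ^ (n + 1) * u x' := by
  classical
  obtain ⟨y, hL, hR⟩ := h
  have hy : dLin k Q R (n + 1) u y = 0 := by rw [hdu]; rfl
  have hL' : ∀ z, IsExtL z y ↔ z = x := fun z => ⟨fun hz => hz.inj hL, fun hz => hz ▸ hL⟩
  have hR' : ∀ z, IsExtR z y ↔ z = x' := fun z => ⟨fun hz => hz.inj hR, fun hz => hz ▸ hR⟩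
  simp only [dLin_apply, dB_apply, hL', hR', mul_sub, mul_ite, mul_one, mul_zero,
    Finsupp.sum_sub, Finsupp.sum_ite_self_eq', Finsupp.sum_ite_eq', Finsupp.mem_support_iff,
    ne_eq, ite_not] at hy
  split_ifs at hy with h
  · linear_combination hy - (-1) ^ (n + 1) * h
  · linear_combination hy

theorem IsIrreducibleCocycle.eq_support_of_closed {u : Coch k Q R (n + 1)}
    (hirr : IsIrreducibleCocycle k Q R (n + 1) u) {T : Finset (GB Q R (n + 1))}
    (hT : T ⊆ u.support) (hne : T.Nonempty)
    (hcl : ∀ x ∈ T, ∀ x' ∈ u.support, Linked x x' ∨ Linked x' x → x' ∈ T) :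
    T = u.support := by
  by_contra hTu
  set v := u.filter (· ∈ T)
  have hvT : v.support = T := by
    rw [Finsupp.support_filter, Finset.filter_mem_eq_inter, Finset.inter_eq_right.2 hT]
  have hdv : dLin k Q R (n + 1) v = 0 := by
    ext y
    rw [dLin_apply, Finsupp.sum_filter_index, hvT, Finsupp.coe_zero, Pi.zero_apply]
    by_cases hy : ∃ x ∈ T, dB k Q R (n + 1) x y ≠ 0
    · obtain ⟨x, hxT, hxy⟩ := hy
      rw [Finset.sum_subset hT]
      · exact (dLin_apply u y).symm.trans (by rw [hirr.1]; rfl)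
      intro x' hx' hx'T
      by_contra h0
      refine hx'T ?_
      rcases isExtL_or_isExtR_of_dB_ne_zero hxy with hL | hR <;>
        rcases isExtL_or_isExtR_of_dB_ne_zero (right_ne_zero_of_mul h0) with hL' | hR'
      · exact hL.inj hL' ▸ hxT
      · exact hcl x hxT x' hx' (Or.inl ⟨y, hL, hR'⟩)
      · exact hcl x hxT x' hx' (Or.inr ⟨y, hL', hR⟩)
      · exact hR.inj hR' ▸ hxT
    · simp only [not_exists, not_and, not_not] at hy
      exact Finset.sum_eq_zero fun x hx => by rw [hy x hx, mul_zero]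
  have hw : u.filter (· ∉ T) = u - v := eq_sub_of_add_eq' (Finsupp.filter_add_filter_not u _)
  refine hirr.2 ⟨v, u.filter (· ∉ T), ?_, ?_, hdv, ?_, ?_,
    (Finsupp.filter_add_filter_not u _).symm⟩
  · rw [← Finsupp.support_nonempty_iff, hvT]
    exact hne
  · obtain ⟨x, hx, hxT⟩ := Finset.exists_of_ssubset (lt_of_le_of_ne hT hTu)
    rw [← Finsupp.support_nonempty_iff, Finsupp.support_filter]
    exact ⟨x, Finset.mem_filter.2 ⟨hx, hxT⟩⟩
  · rw [hw, map_sub, hirr.1, hdv, sub_zero]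
  · rw [Finsupp.support_filter, Finsupp.support_filter]
    exact Finset.disjoint_filter_filter_not _ _ _

theorem IsIrreducibleCocycle.exists_linked {u : Coch k Q R (n + 1)}
    (hirr : IsIrreducibleCocycle k Q R (n + 1) u) (hrk : 1 < u.support.card)
    {x : GB Q R (n + 1)} (hx : x ∈ u.support) :
    ∃ x' ∈ u.support, Linked x x' ∨ Linked x' x := by
  by_contra h
  have hsupp := hirr.eq_support_of_closed (T := {x}) (by simpa using hx) (by simp)
    fun z hz x' hx' hl => absurd ⟨x', hx', Finset.mem_singleton.1 hz ▸ hl⟩ h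
  rw [← hsupp, Finset.card_singleton] at hrk
  exact lt_irrefl 1 hrk

end Cocycles

section Orbits

variable {k : Type} [Field k] {Q : Quiv} {R : Set (Q.A × Q.A)} {m n : ℕ} {C : PathDat Q}

theorem complete_fst_of_linked {x x' : GB Q R (n + 1)} (hα : x.val.2.2 = [])
    (h : Linked x x' ∨ Linked x' x) : Complete Q R x.val.1 := by
  obtain ⟨c, t, hct⟩ := List.exists_cons_of_ne_nil (GB.fst_ne_nil x)
  obtain ⟨l, a, hla⟩ := (List.eq_nil_or_concat' x.val.1.2).resolve_left (GB.fst_ne_nil x)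
  have hwrap : (a, c) ∈ R := by
    rcases h with ⟨y, ⟨b, hy₁, hy₂⟩, a', hy₁', hy₂'⟩ |
      ⟨y, ⟨b, hy₁, hy₂⟩, a', hy₁', hy₂'⟩
    · have h₁ := hy₁.symm.trans hy₁'
      have h₂ := hy₂.symm.trans hy₂'
      rw [hct] at h₁
      rw [hα] at h₂
      simp only [List.cons_append, List.nil_append, List.cons.injEq] at h₁ h₂
      obtain rfl : b = c := h₂.1.trans h₁.1.symm
      have hch := (inG_iff_s7.1 y.2.1).2
      rw [hy₁, hla] at hch
      exact ((List.isChain_append.1 hch).2.2 a (by simp) b (by simp)).2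
    · have h₁ : (x'.val.1.2 ++ [b]).getLast? = ((a' :: l) ++ [a]).getLast? := by
        rw [← hy₁, hy₁', hla, List.cons_append]
      have h₂ : (x'.val.2.2 ++ [b]).getLast? = [a'].getLast? := by rw [← hy₂, hy₂', hα]
      simp only [List.getLast?_concat, List.getLast?_singleton, Option.some_inj] at h₁ h₂
      obtain rfl : a' = a := h₂.symm.trans h₁
      have hch := (inG_iff_s7.1 y.2.1).2
      rw [hy₁', hct] at hch
      exact (List.isChain_cons_cons.1 hch).1.2
  have hγ := (inG_iff_s7.1 x.2.1).2
  refine complete_iff.2 ⟨GB.fst_ne_nil x, (inG_iff_s7.1 x.2.1).1,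
    List.isChain_append.2 ⟨hγ, hγ, fun a₁ ha₁ c₁ hc₁ => ?_⟩⟩
  obtain rfl : a₁ = a := by simpa [hla] using ha₁.symm
  obtain rfl : c₁ = c := by simpa [hct] using hc₁.symm
  refine ⟨?_, hwrap⟩
  have hpar : ptgt Q x.val.1 = ptgt Q x.val.2 := x.2.2.2.2.2
  rw [ptgt_of_concat hla, ptgt, hα] at hpar
  rw [hpar]
  exact (GB.snd_fst x).trans (x.2.1.1.fst_eq hct)


theorem gbmem_cyclePair (hC : Complete Q R C) (hlen : plen Q C = m) :
    GBmem Q R m (C, (psrc Q C, [])) :=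
  ⟨hC.inG, hlen, ⟨⟨List.isChain_nil, by simp⟩, List.isChain_nil⟩, rfl, hC.1.2.2.symm⟩

def cyclePair (hC : Complete Q R C) (hlen : plen Q C = m) : GB Q R m :=
  ⟨(C, (psrc Q C, [])), gbmem_cyclePair hC hlen⟩

theorem linked_cyclePair_rotP (hC : Complete Q R C) (hlen : plen Q C = n + 1) :
    Linked (cyclePair (complete_rotP hC) ((plen_rotP C).trans hlen)) (cyclePair hC hlen) := by
  obtain ⟨hne, -, hch⟩ := complete_iff.1 hC
  obtain ⟨l, a, hla⟩ := (List.eq_nil_or_concat' C.2).resolve_left hne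
  have hrot := rotP_of_concat hla
  have hy : GBmem Q R (n + 2) ((Q.src a, a :: l ++ [a]), (Q.src a, [a])) := by
    refine ⟨inG_iff_s7.2 ⟨by simp, hch.infix ⟨l, [], by simp [hla]⟩⟩, ?_,
      ⟨⟨List.isChain_singleton a, by simp⟩, List.isChain_singleton a⟩, rfl, ?_⟩
    · simpa [plen, hla] using hlen
    · rw [ptgt_of_concat (l := a :: l) rfl, ptgt_of_concat (l := []) rfl]
  refine ⟨⟨_, hy⟩, ⟨a, ?_, rfl⟩, ⟨a, ?_, rfl⟩⟩
  · simp [cyclePair, hrot]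
  · simp [cyclePair, hla]

def orbitPair (hC : Complete Q R C) (hlen : plen Q C = m) (i : ℕ) : GB Q R m :=
  cyclePair (complete_rotI hC i) ((plen_rotI C i).trans hlen)

theorem linked_orbitPair_succ (hC : Complete Q R C) (hlen : plen Q C = n + 1) (i : ℕ) :
    Linked (orbitPair hC hlen (i + 1)) (orbitPair hC hlen i) := by
  have h : orbitPair hC hlen (i + 1) =
      cyclePair (complete_rotP (complete_rotI hC i)) ((plen_rotP _).trans
        ((plen_rotI C i).trans hlen)) := by
    simp only [orbitPair, cyclePair, rotI, Function.iterate_succ_apply']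
  rw [h]
  exact linked_cyclePair_rotP _ _

theorem orbitPair_mod (hC : Complete Q R C) (hlen : plen Q C = m) (i : ℕ) :
    orbitPair hC hlen (i % periodP Q C) = orbitPair hC hlen i := by
  simp only [orbitPair, cyclePair, rotI, periodP_eq_minimalPeriod,
    Function.iterate_mod_minimalPeriod_eq]

theorem orbitPair_injOn (hC : Complete Q R C) (hlen : plen Q C = m) :
    Set.InjOn (orbitPair hC hlen) (Set.Iio (periodP Q C)) := by
  intro i hi j hj hij
  rw [periodP_eq_minimalPeriod] at hi hj
  exact Function.iterate_injOn_Iio_minimalPeriod hi hj (congrArg (fun z => z.val.1) hij)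

theorem apply_orbitPair {u : Coch k Q R (n + 1)} (hdu : dLin k Q R (n + 1) u = 0)
    (hC : Complete Q R C) (hlen : plen Q C = n + 1) (i : ℕ) :
    u (orbitPair hC hlen i) = ((-1) ^ (n + 1)) ^ i * u (cyclePair hC hlen) := by
  induction i with
  | zero => simp [orbitPair, cyclePair, rotI]
  | succ i ih =>
    rw [apply_eq_of_linked hdu (linked_orbitPair_succ hC hlen i), ih, pow_succ]
    ring

theorem support_eq_image_orbitPair (hg : IsGentle Q R) {u : Coch k Q R (n + 1)}
    (hirr : IsIrreducibleCocycle k Q R (n + 1) u) (hC : Complete Q R C)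
    (hlen : plen Q C = n + 1) (hu : cyclePair hC hlen ∈ u.support) :
    u.support = (Finset.range (periodP Q C)).image (orbitPair hC hlen) := by
  set p := periodP Q C
  have hmem : ∀ i, orbitPair hC hlen i ∈ (Finset.range p).image (orbitPair hC hlen) :=
    fun i => Finset.mem_image.2
      ⟨i % p, Finset.mem_range.2 (Nat.mod_lt _ hC.periodP_pos), orbitPair_mod hC hlen i⟩
  refine (hirr.eq_support_of_closed ?_ ⟨_, hmem 0⟩ ?_).symm
  · intro x hx
    obtain ⟨i, -, rfl⟩ := Finset.mem_image.1 hx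
    rw [Finsupp.mem_support_iff, apply_orbitPair hirr.1]
    exact mul_ne_zero (pow_ne_zero _ (pow_ne_zero _ (neg_ne_zero.2 one_ne_zero)))
      (Finsupp.mem_support_iff.1 hu)
  · intro x hx x' _ hlink
    obtain ⟨i, -, rfl⟩ := Finset.mem_image.1 hx
    rcases hlink with hlink | hlink
    · have hpred : Linked (orbitPair hC hlen i) (orbitPair hC hlen (i + p - 1)) := by
        have h := linked_orbitPair_succ hC hlen (i + p - 1)
        rwa [Nat.sub_add_cancel (by have := hC.periodP_pos; omega), ← orbitPair_mod,
          Nat.add_mod_right, orbitPair_mod] at h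
      rw [hlink.right_unique hg hpred]
      exact hmem _
    · rw [hlink.left_unique hg (linked_orbitPair_succ hC hlen i)]
      exact hmem _

theorem card_support_eq_periodP (hg : IsGentle Q R) {u : Coch k Q R (n + 1)}
    (hirr : IsIrreducibleCocycle k Q R (n + 1) u) (hC : Complete Q R C)
    (hlen : plen Q C = n + 1) (hu : cyclePair hC hlen ∈ u.support) :
    u.support.card = periodP Q C := by
  rw [support_eq_image_orbitPair hg hirr hC hlen hu, Finset.card_image_of_injOn,
    Finset.card_range]
  rw [Finset.coe_range]
  exact orbitPair_injOn hC hlen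

theorem pow_periodP_eq_one {u : Coch k Q R (n + 1)} (hdu : dLin k Q R (n + 1) u = 0)
    (hC : Complete Q R C) (hlen : plen Q C = n + 1) (hu : cyclePair hC hlen ∈ u.support) :
    ((-1 : k) ^ (n + 1)) ^ periodP Q C = 1 := by
  have h := apply_orbitPair hdu hC hlen (periodP Q C)
  rw [← orbitPair_mod, Nat.mod_self] at h
  exact (mul_eq_right₀ (Finsupp.mem_support_iff.1 hu)).1 h.symm

theorem eq_smul_cycG (hg : IsGentle Q R) {u : Coch k Q R (n + 1)}
    (hirr : IsIrreducibleCocycle k Q R (n + 1) u) (hC : Complete Q R C)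
    (hlen : plen Q C = n + 1) (hu : cyclePair hC hlen ∈ u.support) :
    u = u (cyclePair hC hlen) • cycG k Q R (n + 1) C := by
  have hbv : ∀ i, bv k Q R (n + 1) (rotI Q i C, (psrc Q (rotI Q i C), [])) =
      Finsupp.single (orbitPair hC hlen i) 1 := fun i => dif_pos _
  conv_lhs => rw [← Finsupp.sum_single u]
  rw [Finsupp.sum, support_eq_image_orbitPair hg hirr hC hlen hu, Finset.sum_image, cycG,
    Finset.smul_sum]
  · refine Finset.sum_congr rfl fun i _ => ?_
    rw [hbv, apply_orbitPair hirr.1, smul_smul, Finsupp.smul_single, smul_eq_mul, mul_one,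
      pow_mul', mul_comm]
  · intro i hi j hj hij
    exact orbitPair_injOn hC hlen (by simpa using hi) (by simpa using hj) hij

end Orbits

theorem even_or_ringChar_eq_two {k : Type} [Field k] {m p : ℕ} (h : ((-1 : k) ^ m) ^ p = 1)
    (hp : p ∣ m) : Even m ∨ ringChar k = 2 := by
  rcases Nat.even_or_odd m with hm | hm
  · exact Or.inl hm
  · rw [hm.neg_one_pow, (Odd.of_dvd_nat hm hp).neg_one_pow] at h
    exact Or.inr (neg_one_eq_one_iff.1 h)

section Coboundaries

variable {k : Type} [Field k] {Q : Quiv} {R : Set (Q.A × Q.A)} {n : ℕ}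

theorem Linked.head?_eq {x₀ x₁ : GB Q R (n + 1)} (h : Linked x₀ x₁)
    (hα : x₀.val.2.2 ≠ []) :
    x₀.val.1.2.head? = x₀.val.2.2.head? := by
  obtain ⟨y, ⟨b, hy₁, hy₂⟩, a, hy₁', hy₂'⟩ := h
  have h₁ := congrArg List.head? (hy₁.symm.trans hy₁')
  have h₂ := congrArg List.head? (hy₂.symm.trans hy₂')
  rw [List.head?_append_of_ne_nil _ (GB.fst_ne_nil x₀)] at h₁
  rw [List.head?_append_of_ne_nil _ hα] at h₂
  rw [h₁, h₂, List.head?_cons, List.head?_cons]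

theorem Linked.getLast?_eq {x₀ x₁ : GB Q R (n + 1)} (h : Linked x₀ x₁)
    (hα : x₁.val.2.2 ≠ []) :
    x₁.val.1.2.getLast? = x₁.val.2.2.getLast? := by
  obtain ⟨y, ⟨b, hy₁, hy₂⟩, a, hy₁', hy₂'⟩ := h
  have h₁ := congrArg List.getLast? (hy₁.symm.trans hy₁')
  have h₂ := congrArg List.getLast? (hy₂.symm.trans hy₂')
  rw [List.getLast?_cons_of_ne_nil (GB.fst_ne_nil x₁)] at h₁
  rw [List.getLast?_cons_of_ne_nil hα] at h₂
  rw [← h₁, ← h₂, List.getLast?_concat, List.getLast?_concat]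

theorem not_isExtR_of_head?_eq {x : GB Q R (n + 1)} {y : GB Q R (n + 2)} (hα : x.val.2.2 ≠ [])
    (hhd : x.val.1.2.head? = x.val.2.2.head?) : ¬IsExtR x y := by
  rintro ⟨a, hy₁, hy₂⟩
  obtain ⟨c, t, hct⟩ := List.exists_cons_of_ne_nil (GB.fst_ne_nil x)
  obtain ⟨c', s, hcs⟩ := List.exists_cons_of_ne_nil hα
  obtain rfl : c = c' := by simpa [hct, hcs] using hhd
  have hΓ := (inG_iff_s7.1 y.2.1).2
  have hB : y.val.2.2.IsChain (fun a b => (a, b) ∉ R) := y.2.2.2.1.2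
  rw [hy₁, hct] at hΓ
  rw [hy₂, hcs] at hB
  exact (List.isChain_cons_cons.1 hB).1 (List.isChain_cons_cons.1 hΓ).1.2

theorem not_isExtL_of_getLast?_eq {x : GB Q R (n + 1)} {y : GB Q R (n + 2)}
    (hα : x.val.2.2 ≠ []) (hlast : x.val.1.2.getLast? = x.val.2.2.getLast?) : ¬IsExtL x y := by
  rintro ⟨b, hy₁, hy₂⟩
  obtain ⟨t, c, htc⟩ := (List.eq_nil_or_concat' x.val.1.2).resolve_left (GB.fst_ne_nil x)
  obtain ⟨s, c', hsc⟩ := (List.eq_nil_or_concat' x.val.2.2).resolve_left hα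
  obtain rfl : c = c' := by simpa [htc, hsc] using hlast
  have hΓ := (inG_iff_s7.1 y.2.1).2
  have hB : y.val.2.2.IsChain (fun a b => (a, b) ∉ R) := y.2.2.2.1.2
  rw [hy₁, htc] at hΓ
  rw [hy₂, hsc] at hB
  exact (List.isChain_append.1 hB).2.2 c (by simp) b (by simp)
    ((List.isChain_append.1 hΓ).2.2 c (by simp) b (by simp)).2

theorem gbmem_tail {m : ℕ} (x : GB Q R (m + 1)) {a : Q.A} {t s : List Q.A}
    (hγ : x.val.1.2 = a :: t) (hα : x.val.2.2 = a :: s) :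
    GBmem Q R m ((Q.tgt a, t), (Q.tgt a, s)) := by
  have hΓ : x.val.1.2.IsChain (fun a b => (a, b) ∈ R) := x.2.1.2
  have hB : x.val.2.2.IsChain (fun a b => (a, b) ∉ R) := x.2.2.2.1.2
  have hlen : plen Q x.val.1 = m + 1 := x.2.2.1
  rw [hγ] at hΓ
  rw [hα] at hB
  refine ⟨⟨x.2.1.1.tail hγ, hΓ.tail⟩, by simpa [plen, hγ] using hlen,
    ⟨x.2.2.2.1.1.tail hα, hB.tail⟩, rfl, ?_⟩
  rw [← ptgt_of_cons hγ, ← ptgt_of_cons hα]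
  exact x.2.2.2.2.2

theorem Linked.exists_isExtR_isExtL {x₀ x₁ : GB Q R (n + 2)} (h : Linked x₀ x₁)
    (hα : x₀.val.2.2 ≠ []) : ∃ w : GB Q R (n + 1), IsExtR w x₀ ∧ IsExtL w x₁ := by
  obtain ⟨y, ⟨b, hy₁, hy₂⟩, a, hy₁', hy₂'⟩ := h
  obtain ⟨c, t, hct⟩ := List.exists_cons_of_ne_nil (GB.fst_ne_nil x₀)
  obtain ⟨c', s, hcs⟩ := List.exists_cons_of_ne_nil hα
  have h₁ := hy₁.symm.trans hy₁'
  have h₂ := hy₂.symm.trans hy₂'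
  rw [hct, List.cons_append, List.cons.injEq] at h₁
  rw [hcs, List.cons_append, List.cons.injEq] at h₂
  obtain ⟨rfl, h₁⟩ := h₁
  obtain ⟨rfl, h₂⟩ := h₂
  exact ⟨⟨_, gbmem_tail x₀ hct hcs⟩, ⟨_, hct, hcs⟩, ⟨b, h₁.symm, h₂.symm⟩⟩

theorem dB_eq_of_isExtL_of_isExtR (hg : IsGentle Q R) {w : GB Q R (n + 1)}
    {y₀ y₁ : GB Q R (n + 2)} (hL : IsExtL w y₁) (hR : IsExtR w y₀) :
    dB k Q R (n + 1) w = Finsupp.single y₁ 1 - (-1 : k) ^ (n + 1) • Finsupp.single y₀ 1 := by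
  ext y
  have hL' : IsExtL w y ↔ y₁ = y := ⟨hL.unique hg, fun h => h ▸ hL⟩
  have hR' : IsExtR w y ↔ y₀ = y := ⟨hR.unique hg, fun h => h ▸ hR⟩
  simp only [dB_apply, hL', hR', Finsupp.sub_apply, Finsupp.smul_apply, Finsupp.single_apply,
    smul_eq_mul]

theorem support_eq_pair_of_linked (hg : IsGentle Q R) {u : Coch k Q R (n + 1)}
    (hirr : IsIrreducibleCocycle k Q R (n + 1) u) {x₀ x₁ : GB Q R (n + 1)}
    (hx₀ : x₀ ∈ u.support) (hx₁ : x₁ ∈ u.support) (hlink : Linked x₀ x₁)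
    (hα₀ : x₀.val.2.2 ≠ []) (hα₁ : x₁.val.2.2 ≠ []) : u.support = {x₀, x₁} := by
  have hnoR : ∀ y, ¬IsExtR x₀ y := fun _ =>
    not_isExtR_of_head?_eq hα₀ (hlink.head?_eq hα₀)
  have hnoL : ∀ y, ¬IsExtL x₁ y := fun _ =>
    not_isExtL_of_getLast?_eq hα₁ (hlink.getLast?_eq hα₁)
  refine (hirr.eq_support_of_closed (by simp [Finset.insert_subset_iff, hx₀, hx₁]) (by simp)
    fun x hx x' _ hl => ?_).symm
  rcases Finset.mem_insert.1 hx with rfl | hx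
  · rcases hl with hl | ⟨y, -, hR⟩
    · simp [hl.right_unique hg hlink]
    · exact absurd hR (hnoR y)
  · rw [Finset.mem_singleton] at hx
    subst hx
    rcases hl with ⟨y, hL, -⟩ | hl
    · exact absurd hL (hnoL y)
    · simp [hl.left_unique hg hlink]

theorem exists_dLin_eq_of_forall_snd_ne_nil (hg : IsGentle Q R) {u : Coch k Q R (n + 2)}
    (hirr : IsIrreducibleCocycle k Q R (n + 2) u) (hrk : 1 < u.support.card)
    (hα : ∀ x ∈ u.support, x.val.2.2 ≠ []) :
    ∃ v : Coch k Q R (n + 1), dLin k Q R (n + 1) v = u := by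
  obtain ⟨x, hx⟩ := Finset.card_pos.1 (by omega : 0 < u.support.card)
  obtain ⟨x₀, hx₀, x₁, hx₁, hlink⟩ :
      ∃ x₀ ∈ u.support, ∃ x₁ ∈ u.support, Linked x₀ x₁ := by
    obtain ⟨x', hx', hl | hl⟩ := hirr.exists_linked hrk hx
    exacts [⟨x, hx, x', hx', hl⟩, ⟨x', hx', x, hx, hl⟩]
  have hsupp : u.support = {x₀, x₁} :=
    support_eq_pair_of_linked hg hirr hx₀ hx₁ hlink (hα x₀ hx₀) (hα x₁ hx₁)
  have hne : x₀ ≠ x₁ := by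
    rintro rfl
    simp [hsupp] at hrk
  obtain ⟨w, hwR, hwL⟩ := hlink.exists_isExtR_isExtL (hα x₀ hx₀)
  refine ⟨Finsupp.single w (u x₁), ?_⟩
  rw [dLin, Finsupp.linearCombination_single, dB_eq_of_isExtL_of_isExtR hg hwL hwR]
  conv_rhs => rw [← Finsupp.sum_single u, Finsupp.sum, hsupp, Finset.sum_pair hne,
    apply_eq_of_linked hirr.1 hlink]
  ext z
  simp only [Finsupp.smul_apply, Finsupp.sub_apply, Finsupp.add_apply, Finsupp.single_apply,
    smul_eq_mul]
  split_ifs <;> ring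

end Coboundaries

/-- Let `(Q, R)` be a gentle presentation and `m = m' + 2 ≥ 2`.
If `u` is an irreducible cocycle in `k(Γ_m ∥ B)` of rank `r > 1` that is not a
coboundary, then: (1) `m` is even or `char k = 2`; and (2) `r` divides `m` and
there is a complete cycle `C` of length `m` and period `r` such that `u` is a
nonzero scalar multiple of `⟨C⟩`. -/
theorem irreducible_cocycles_of_rank_gt_one (k : Type) [Field k] (Q : Quiv)
    (R : Set (Q.A × Q.A)) (hg : IsGentle Q R) (m' : ℕ)
    (u : Coch k Q R (m' + 2)) (hirr : IsIrreducibleCocycle k Q R (m' + 2) u)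
    (hrk : 1 < u.support.card)
    (hnb : ¬∃ y : Coch k Q R (m' + 1), dLin k Q R (m' + 1) y = u) :
    (Even (m' + 2) ∨ ringChar k = 2) ∧
    u.support.card ∣ (m' + 2) ∧
    ∃ C : PathDat Q, Complete Q R C ∧ plen Q C = m' + 2 ∧
      periodP Q C = u.support.card ∧
      ∃ c : k, c ≠ 0 ∧ u = c • cycG k Q R (m' + 2) C := by
  by_cases hα : ∀ x ∈ u.support, x.val.2.2 ≠ []
  · exact absurd (exists_dLin_eq_of_forall_snd_ne_nil hg hirr hrk hα) hnb
  obtain ⟨x₀, hx₀, hα₀⟩ : ∃ x ∈ u.support, x.val.2.2 = [] := by simpa using hα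
  obtain ⟨x', -, hlink⟩ := hirr.exists_linked hrk hx₀
  have hC : Complete Q R x₀.val.1 := complete_fst_of_linked hα₀ hlink
  have hlen : plen Q x₀.val.1 = m' + 2 := x₀.2.2.1
  have hx₀C : x₀ = cyclePair hC hlen :=
    Subtype.ext (Prod.ext rfl (Prod.ext (GB.snd_fst x₀) hα₀))
  rw [hx₀C] at hx₀
  have hcard := card_support_eq_periodP hg hirr hC hlen hx₀
  have hdvd : u.support.card ∣ m' + 2 := hcard ▸ hC.periodP_dvd_plen.trans (dvd_of_eq hlen)
  exact ⟨even_or_ringChar_eq_two (hcard ▸ pow_periodP_eq_one hirr.1 hC hlen hx₀) hdvd, hdvd,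
    _, hC, hlen, hcard.symm, _, Finsupp.mem_support_iff.1 hx₀,
    eq_smul_cycG hg hirr hC hlen hx₀⟩

end GentleTT
end
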